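/- arXiv:2206.02192 — 8 statements merged into one kernel-verified Lean document; each statement's English description precedes it below -/
import Mathlib

section
/- Let n ≥ 1, let y₀ > 1 be a real number, and let U be a real symmetric n×n matrix. Set Z = U + i·y₀·1ₙ, an n×n complex matrix. Let M be a 2n×2n integer symplectic matrix, written in n×n blocks as M = (a b; c d), and suppose that the lower-left block c is not the zero matrix. Then |det(c·Z + d)| ≥ y₀, where c and d are regarded as complex matrices and |·| is the complex absolute value. -/
/-!
Write `c Z + d = A + i y₀ c` with `A = c U + d` real. As `c dᵀ` and `U` are symmetric,
`|det (c Z + d)|² = det (A Aᵀ + y₀² c cᵀ)`.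

Let `S` index a basis of the column space of `c`; it is nonempty as `c ≠ 0`. Because
`d aᵀ - c bᵀ = 1` and `c dᵀ` is symmetric, the integer matrix `N` whose `j`-th column is `c_j`
for `j ∈ S` and `d_j` otherwise is nonsingular, so `(det N)² ≥ 1`. Sorting the columns of
`(A | y₀ c)` writes `A Aᵀ + y₀² c cᵀ = N₀ N₀ᵀ + R` with `R` positive semidefinite and `N₀` having
columns `y₀ c_j` (`j ∈ S`) and `A_j` (`j ∉ S`). The columns of `c U` lie in the span of the
`c_j`, `j ∈ S`, so `det N₀ = y₀ ^ |S| det N`, and `det (N₀ N₀ᵀ + R) ≥ (det N₀)² ≥ y₀²`.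
-/

open Matrix

namespace Matrix

section PosSemidef

theorem posSemidef_self_mul_transpose {m n : Type*} [Fintype m] [Fintype n] (B : Matrix m n ℝ) :
    (B * Bᵀ).PosSemidef := by
  simpa [conjTranspose_eq_transpose_of_trivial] using posSemidef_self_mul_conjTranspose B

variable {m : Type*} [Fintype m] [DecidableEq m]

theorem PosSemidef.one_le_det_one_add {S : Matrix m m ℝ} (hS : S.PosSemidef) :
    1 ≤ (1 + S).det := by
  have hH : (1 + S).IsHermitian := isHermitian_one.add hS.isHermitian
  rw [hH.det_eq_prod_eigenvalues]
  refine Finset.one_le_prod fun i _ => ?_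
  set v := hH.eigenvectorBasis i
  have hv : star ⇑v ⬝ᵥ ⇑v = 1 := by
    rw [dotProduct_comm, ← EuclideanSpace.inner_eq_star_dotProduct, real_inner_self_eq_norm_sq,
      hH.eigenvectorBasis.orthonormal.1 i, one_pow]
  have := hS.re_dotProduct_nonneg v
  rw [RCLike.ofReal_real_eq_id, id, hH.eigenvalues_eq, add_mulVec, one_mulVec, dotProduct_add, hv]
  simpa using this

theorem sq_det_le_det_mul_transpose_add (N : Matrix m m ℝ) {R : Matrix m m ℝ}
    (hR : R.PosSemidef) : N.det ^ 2 ≤ (N * Nᵀ + R).det := by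
  by_cases hN : N.det = 0
  · simpa [hN] using ((posSemidef_self_mul_transpose N).add hR).det_nonneg
  have hNN : N * N⁻¹ = 1 := mul_nonsing_inv N (isUnit_iff_ne_zero.mpr hN)
  have hS : (N⁻¹ * R * N⁻¹ᵀ).PosSemidef := by
    simpa [conjTranspose_eq_transpose_of_trivial] using hR.mul_mul_conjTranspose_same N⁻¹
  have hfactor : N * (1 + N⁻¹ * R * N⁻¹ᵀ) * Nᵀ = N * Nᵀ + R := by
    rw [mul_add, mul_one, add_mul, ← Matrix.mul_assoc, ← Matrix.mul_assoc, hNN, Matrix.one_mul,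
      Matrix.mul_assoc, ← transpose_mul, hNN, transpose_one, Matrix.mul_one]
  rw [← hfactor, det_mul, det_mul, det_transpose]
  nlinarith [hS.one_le_det_one_add, sq_nonneg N.det]

end PosSemidef

section Idempotent

variable {ι m R : Type*} [Fintype ι] [DecidableEq ι] [CommRing R]
  {P : Matrix ι ι R} (hP : IsIdempotentElem P)
include hP

theorem mul_transpose_add_mul_transpose_eq_of_isIdempotentElem (hPt : Pᵀ = P)
    (B C : Matrix m ι R) :
    B * Bᵀ + C * Cᵀ =
      (B * (1 - P) + C * P) * (B * (1 - P) + C * P)ᵀ + (B * P) * (B * P)ᵀ +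
        (C * (1 - P)) * (C * (1 - P))ᵀ := by
  have hPP (X : Matrix ι m R) : P * (P * X) = P * X := by rw [← Matrix.mul_assoc, hP.eq]
  have hPQ (X : Matrix ι m R) : P * ((1 - P) * X) = 0 := by
    rw [← Matrix.mul_assoc, hP.mul_one_sub_self, Matrix.zero_mul]
  have hQP (X : Matrix ι m R) : (1 - P) * (P * X) = 0 := by
    rw [← Matrix.mul_assoc, hP.one_sub_mul_self, Matrix.zero_mul]
  have hQQ (X : Matrix ι m R) : (1 - P) * ((1 - P) * X) = (1 - P) * X := by
    rw [← Matrix.mul_assoc, hP.one_sub.eq]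
  simp only [transpose_add, transpose_mul, transpose_sub, transpose_one, hPt,
    Matrix.add_mul, Matrix.mul_add, Matrix.mul_assoc, hPP, hPQ, hQP, hQQ]
  simp only [Matrix.sub_mul, Matrix.mul_sub, Matrix.one_mul, Matrix.mul_zero, add_zero, zero_add]
  abel

theorem mul_one_sub_add_mul_mul_one_sub_add_smul (B C : Matrix m ι R) (y : R) :
    (B * (1 - P) + C * P) * (1 - P + y • P) = B * (1 - P) + (y • C) * P := by
  simp only [Matrix.add_mul, Matrix.mul_add, Matrix.mul_smul, Matrix.smul_mul, Matrix.mul_assoc,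
    hP.one_sub.eq, hP.eq, hP.mul_one_sub_self, hP.one_sub_mul_self, Matrix.mul_zero,
    add_zero, zero_add]

theorem det_add_mul_mul_mul_one_sub (N X : Matrix ι ι R) :
    (N + N * P * X * (1 - P)).det = N.det := by
  have hfactor : N + N * P * X * (1 - P) = N * (1 + P * X * (1 - P)) := by
    simp only [Matrix.mul_add, Matrix.mul_one, Matrix.mul_assoc]
  rw [hfactor, det_mul, Matrix.mul_assoc, det_one_add_mul_comm, Matrix.mul_assoc,
    hP.one_sub_mul_self, Matrix.mul_zero, add_zero, det_one, mul_one]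

end Idempotent

section CoordProj

variable {ι R : Type*} [DecidableEq ι] [CommRing R]

def coordProj (S : Finset ι) : Matrix ι ι R :=
  diagonal fun j => if j ∈ S then 1 else 0

variable (S : Finset ι)

theorem transpose_coordProj : (coordProj S : Matrix ι ι R)ᵀ = coordProj S :=
  diagonal_transpose _

theorem map_coordProj {R' : Type*} [CommRing R'] (f : R →+* R') :
    (coordProj S : Matrix ι ι R).map f = coordProj S := by
  simp [coordProj, diagonal_map, apply_ite f]

variable [Fintype ι]

theorem isIdempotentElem_coordProj : IsIdempotentElem (coordProj S : Matrix ι ι R) := by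
  simp +contextual [IsIdempotentElem, coordProj, diagonal_mul_diagonal]

theorem det_one_sub_coordProj_add_smul (y : R) :
    (1 - coordProj S + y • coordProj S : Matrix ι ι R).det = y ^ S.card := by
  have : (1 - coordProj S + y • coordProj S : Matrix ι ι R) =
      diagonal fun j => if j ∈ S then y else 1 := by
    ext i j
    by_cases hij : i = j <;> by_cases hj : j ∈ S <;> simp [coordProj, hij, hj]
  rw [this, det_diagonal, Finset.prod_ite_mem, Finset.univ_inter, Finset.prod_const]

theorem mul_coordProj_apply {m : Type*} (A : Matrix m ι R) (i : m) (j : ι) :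
    (A * (coordProj S : Matrix ι ι R)) i j = if j ∈ S then A i j else 0 := by
  simp [coordProj, mul_diagonal]

theorem coordProj_mulVec (w : ι → R) :
    coordProj S *ᵥ w = fun j => if j ∈ S then w j else 0 := by
  ext j
  simp [coordProj, mulVec_diagonal]

/-- `S` indexes a basis of the column space of `c`. -/
theorem exists_coordProj_columns_basis {m K : Type*} [Field K] (c : Matrix m ι K) :
    ∃ S : Finset ι, (∃ X : Matrix ι ι K, c = c * (coordProj S : Matrix ι ι K) * X) ∧
      ∀ w, c *ᵥ ((coordProj S : Matrix ι ι K) *ᵥ w) = 0 → coordProj S *ᵥ w = 0 := by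
  classical
  obtain ⟨b, -, -, hspan, hli⟩ := exists_linearIndepOn_extension (v := cᵀ)
    (linearIndepOn_empty K _) (Set.empty_subset Set.univ)
  rw [← Set.coe_toFinset b] at hspan hli
  refine ⟨b.toFinset, ?_, fun w hw => ?_⟩
  · have hcol (j : ι) : ∃ f : ι → K, ∑ i ∈ b.toFinset, f i • cᵀ i = cᵀ j :=
      (Submodule.mem_span_image_finset_iff_exists_fun' K).mp (hspan ⟨j, trivial, rfl⟩)
    choose f hf using hcol
    refine ⟨of fun i j => f j i, ?_⟩
    ext k j
    have := congrFun (hf j) k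
    simp only [Finset.sum_apply, Pi.smul_apply, transpose_apply, smul_eq_mul] at this
    rw [← this, Matrix.mul_apply]
    simp only [mul_coordProj_apply, of_apply, mul_ite, mul_zero, Finset.sum_ite_mem,
      Finset.univ_inter, mul_comm]
  · have hsum : ∑ i ∈ b.toFinset, w i • cᵀ i = 0 := by
      rw [← hw]
      ext k
      rw [coordProj_mulVec]
      simp only [mulVec, dotProduct, mul_ite, mul_zero, Finset.sum_ite_mem,
        Finset.univ_inter, Finset.sum_apply, Pi.smul_apply, transpose_apply, smul_eq_mul, mul_comm]
    have := linearIndepOn_finset_iff.mp hli w hsum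
    ext i
    by_cases hi : i ∈ b <;> simp_all [coordProj_mulVec]

end CoordProj

section CoprimeSymmetricPair

variable {ι R : Type*} [Fintype ι] [CommRing R]

theorem mul_add_mul_transpose_comm {c d U : Matrix ι ι R} (hcd : c * dᵀ = d * cᵀ)
    (hU : U.IsSymm) : (c * U + d) * cᵀ = c * (c * U + d)ᵀ := by
  rw [transpose_add, transpose_mul, hU.eq, Matrix.add_mul, Matrix.mul_add, Matrix.mul_assoc, hcd]

variable [DecidableEq ι]

def IsCoprimeSymmetricPair (c d : Matrix ι ι R) : Prop :=
  c * dᵀ = d * cᵀ ∧ ∃ a b : Matrix ι ι R, d * aᵀ - c * bᵀ = 1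

theorem IsCoprimeSymmetricPair.map {S : Type*} [CommRing S] {c d : Matrix ι ι R}
    (h : IsCoprimeSymmetricPair c d) (f : R →+* S) :
    IsCoprimeSymmetricPair (c.map f) (d.map f) := by
  obtain ⟨hsym, a, b, hco⟩ := h
  refine ⟨?_, a.map f, b.map f, ?_⟩
  · simpa [transpose_map] using congrArg f.mapMatrix hsym
  · have := congrArg f.mapMatrix hco
    rw [map_sub, map_mul, map_mul, map_one] at this
    simpa [transpose_map] using this

theorem isCoprimeSymmetricPair_toBlocks₂₁_toBlocks₂₂ {M : Matrix (ι ⊕ ι) (ι ⊕ ι) R}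
    (hM : M ∈ symplecticGroup ι R) : IsCoprimeSymmetricPair M.toBlocks₂₁ M.toBlocks₂₂ := by
  rw [SymplecticGroup.mem_iff, ← fromBlocks_toBlocks M, J, fromBlocks_transpose,
    fromBlocks_multiply, fromBlocks_multiply] at hM
  obtain ⟨-, -, h₂₁, h₂₂⟩ := fromBlocks_inj.mp hM
  simp only [Matrix.mul_zero, Matrix.mul_one, Matrix.mul_neg, zero_add, add_zero,
    Matrix.neg_mul] at h₂₁ h₂₂
  exact ⟨(neg_add_eq_zero.mp (by rwa [add_comm] at h₂₂)), M.toBlocks₁₁, M.toBlocks₁₂,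
    by rwa [sub_eq_add_neg]⟩

theorem IsCoprimeSymmetricPair.det_mul_add_mul_one_sub_ne_zero {K : Type*} [Field K]
    {c d X P : Matrix ι ι K} (hcd : IsCoprimeSymmetricPair c d) (hP : IsIdempotentElem P)
    (hPt : Pᵀ = P) (hX : c = c * P * X) (hinj : ∀ w, c *ᵥ (P *ᵥ w) = 0 → P *ᵥ w = 0) :
    (c * P + d * (1 - P)).det ≠ 0 := by
  obtain ⟨hsym, a, b, hco⟩ := hcd
  -- a left null vector `v` of the matrix kills `c`, then `v d`, hence `v = v (d aᵀ - c bᵀ) = 0`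
  intro h0
  obtain ⟨v, hv0, hv⟩ := exists_vecMul_eq_zero_iff.mpr h0
  apply hv0
  have hvcP : v ᵥ* (c * P) = 0 := by
    have := congrArg (· ᵥ* P) hv
    simpa [vecMul_vecMul, Matrix.add_mul, Matrix.mul_assoc, hP.eq, hP.one_sub_mul_self] using this
  have hvdQ : v ᵥ* d ᵥ* (1 - P) = 0 := by
    have := congrArg (· ᵥ* (1 - P)) hv
    simpa [vecMul_vecMul, Matrix.add_mul, Matrix.mul_assoc, hP.one_sub.eq, hP.mul_one_sub_self]
      using this
  have hvc : v ᵥ* c = 0 := by rw [hX, ← vecMul_vecMul, hvcP, zero_vecMul]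
  have hPw : P *ᵥ (v ᵥ* d) = v ᵥ* d := by
    rw [vecMul_sub, vecMul_one, sub_eq_zero] at hvdQ
    rw [← hPt, mulVec_transpose, ← hvdQ]
  have hcw : c *ᵥ (v ᵥ* d) = 0 := by
    rw [← mulVec_transpose, mulVec_mulVec, hsym, ← mulVec_mulVec, mulVec_transpose, hvc,
      mulVec_zero]
  have hvd : v ᵥ* d = 0 := by rw [← hPw]; exact hinj _ (by rwa [hPw])
  calc v = v ᵥ* (d * aᵀ - c * bᵀ) := by rw [hco, vecMul_one]
    _ = 0 := by rw [vecMul_sub, ← vecMul_vecMul, ← vecMul_vecMul, hvd, hvc]; simp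

end CoprimeSymmetricPair

section Complex

variable {ι : Type*} [Fintype ι] [DecidableEq ι]

open Complex in
theorem normSq_det_map_ofReal_add_I_smul (A C : Matrix ι ι ℝ) (h : A * Cᵀ = C * Aᵀ) :
    normSq (A.map ofReal + I • C.map ofReal).det = (A * Aᵀ + C * Cᵀ).det := by
  set W := A.map ofReal + I • C.map ofReal
  have hconj : W.map (starRingEnd ℂ) = A.map ofReal - I • C.map ofReal := by
    ext i j
    simp [W, conj_ofReal, sub_eq_add_neg]
  have hcomm : A.map ofReal * (C.map ofReal)ᵀ = C.map ofReal * (A.map ofReal)ᵀ := by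
    ext i j
    simpa [mul_apply] using congrArg ofReal (congrFun₂ h i j)
  have hprod : W * (W.map (starRingEnd ℂ))ᵀ = (A * Aᵀ + C * Cᵀ).map ofReal := by
    rw [hconj]
    simp only [W, transpose_sub, transpose_smul, Matrix.add_mul, Matrix.mul_sub, Matrix.mul_smul,
      Matrix.smul_mul, hcomm]
    ext i j
    simp [mul_apply, ← mul_assoc]
    ring
  have hdet := congrArg det hprod
  have hconj_det : (W.map (starRingEnd ℂ)).det = starRingEnd ℂ W.det :=
    ((starRingEnd ℂ).map_det W).symm
  rw [det_mul, det_transpose, hconj_det, mul_conj] at hdet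
  exact ofReal_injective (hdet.trans (ofRealHom.map_det _).symm)

end Complex

section DetBound

variable {ι : Type*} [Fintype ι] [DecidableEq ι]

theorem IsCoprimeSymmetricPair.exists_coordProj_one_le_sq_det {c d : Matrix ι ι ℤ}
    (hcd : IsCoprimeSymmetricPair c d) (hc : c ≠ 0) :
    ∃ S : Finset ι, S.Nonempty ∧
      (∃ X, c.map (Int.cast : ℤ → ℝ) = c.map Int.cast * coordProj S * X) ∧
      1 ≤ (c.map (Int.cast : ℤ → ℝ) * coordProj S +
        d.map Int.cast * (1 - coordProj S)).det ^ 2 := by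
  obtain ⟨S, ⟨X, hX⟩, hinj⟩ := exists_coordProj_columns_basis (c.map (Int.cast : ℤ → ℝ))
  refine ⟨S, ?_, ⟨X, hX⟩, ?_⟩
  · rw [Finset.nonempty_iff_ne_empty]
    rintro rfl
    have hP : (coordProj ∅ : Matrix ι ι ℝ) = 0 := by simp [coordProj]
    rw [hP, Matrix.mul_zero, Matrix.zero_mul] at hX
    exact hc (map_injective Int.cast_injective (hX.trans (Matrix.map_zero _ Int.cast_zero).symm))
  · have hN : (c.map (Int.cast : ℤ → ℝ) * coordProj S +
        d.map Int.cast * (1 - coordProj S)).det ≠ 0 :=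
      (hcd.map (Int.castRingHom ℝ)).det_mul_add_mul_one_sub_ne_zero
        (isIdempotentElem_coordProj S) (transpose_coordProj S) hX hinj
    have hN_map : c.map (Int.cast : ℤ → ℝ) * coordProj S + d.map Int.cast * (1 - coordProj S) =
        (Int.castRingHom ℝ).mapMatrix (c * coordProj S + d * (1 - coordProj S)) := by
      simp only [map_add, map_mul, map_sub, map_one, RingHom.mapMatrix_apply, map_coordProj]
      rfl
    rw [hN_map, ← RingHom.map_det, eq_intCast] at hN ⊢
    exact_mod_cast (one_le_sq_iff_one_le_abs _).mpr (Int.one_le_abs (mod_cast hN))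

theorem sq_le_det_mul_transpose_add_of_coordProj {c d X : Matrix ι ι ℝ} {S : Finset ι}
    (hS : S.Nonempty) (hX : c = c * coordProj S * X)
    (hN : 1 ≤ (c * coordProj S + d * (1 - coordProj S)).det ^ 2) (U : Matrix ι ι ℝ) {y : ℝ}
    (hy : 1 ≤ y) : y ^ 2 ≤ ((c * U + d) * (c * U + d)ᵀ + (y • c) * (y • c)ᵀ).det := by
  set P : Matrix ι ι ℝ := coordProj S
  have hP : IsIdempotentElem P := isIdempotentElem_coordProj S
  set N := c * P + d * (1 - P)
  set A := c * U + d
  have hNP : N * P = c * P := by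
    simp only [N, Matrix.add_mul, Matrix.mul_assoc, hP.eq, hP.one_sub_mul_self, Matrix.mul_zero,
      add_zero]
  have hcolumns : A * (1 - P) + c * P = N + N * P * (X * U) * (1 - P) := by
    rw [hNP, ← Matrix.mul_assoc (c * P), ← hX]
    simp only [A, N, Matrix.add_mul]
    abel
  have hscale : (A * (1 - P) + (y • c) * P).det = y ^ S.card * N.det := by
    rw [← mul_one_sub_add_mul_mul_one_sub_add_smul hP, det_mul, hcolumns,
      det_add_mul_mul_mul_one_sub hP, det_one_sub_coordProj_add_smul, mul_comm]
  have hR : ((A * P) * (A * P)ᵀ + ((y • c) * (1 - P)) * ((y • c) * (1 - P))ᵀ).PosSemidef :=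
    (posSemidef_self_mul_transpose _).add (posSemidef_self_mul_transpose _)
  calc y ^ 2 ≤ (y ^ S.card) ^ 2 :=
        pow_le_pow_left₀ (zero_le_one.trans hy) (le_self_pow₀ hy hS.card_pos.ne') 2
    _ ≤ (y ^ S.card * N.det) ^ 2 := by
        rw [mul_pow]; exact le_mul_of_one_le_right (by positivity) hN
    _ = (A * (1 - P) + (y • c) * P).det ^ 2 := by rw [hscale]
    _ ≤ _ := by
        rw [mul_transpose_add_mul_transpose_eq_of_isIdempotentElem hP (transpose_coordProj S),
          add_assoc]
        exact sq_det_le_det_mul_transpose_add _ hR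

end DetBound

end Matrix

theorem stmt_0_general (n : ℕ) (y₀ : ℝ) (hy₀ : 1 < y₀)
    (U : Matrix (Fin n) (Fin n) ℝ) (hU : U.IsSymm)
    (M : Matrix (Fin n ⊕ Fin n) (Fin n ⊕ Fin n) ℤ)
    (hM : M * Matrix.fromBlocks 0 (-1) 1 0 * M.transpose =
      Matrix.fromBlocks (0 : Matrix (Fin n) (Fin n) ℤ) (-1) 1 0)
    (hc : M.toBlocks₂₁ ≠ 0) :
    y₀ ≤ ‖
      (((M.toBlocks₂₁.map (fun x : ℤ => (x : ℂ))) *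
          (U.map (fun x : ℝ => (x : ℂ)) + ((y₀ : ℂ) * Complex.I) • (1 : Matrix (Fin n) (Fin n) ℂ)) +
        M.toBlocks₂₂.map (fun x : ℤ => (x : ℂ))).det)‖ := by
  have hpair := isCoprimeSymmetricPair_toBlocks₂₁_toBlocks₂₂ (SymplecticGroup.mem_iff.mpr hM)
  obtain ⟨S, hS, ⟨X, hX⟩, hN⟩ := hpair.exists_coordProj_one_le_sq_det hc
  set c := M.toBlocks₂₁.map (Int.cast : ℤ → ℝ)
  set d := M.toBlocks₂₂.map (Int.cast : ℤ → ℝ)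
  have hcd : c * dᵀ = d * cᵀ := (hpair.map (Int.castRingHom ℝ)).1
  have hsym : (c * U + d) * (y₀ • c)ᵀ = (y₀ • c) * (c * U + d)ᵀ := by
    rw [transpose_smul, Matrix.mul_smul, Matrix.smul_mul, mul_add_mul_transpose_comm hcd hU]
  have key :
      y₀ ≤ ‖((c * U + d).map Complex.ofReal + Complex.I • (y₀ • c).map Complex.ofReal).det‖ := by
    rw [← sq_le_sq₀ (by positivity) (norm_nonneg _), ← Complex.normSq_eq_norm_sq,
      normSq_det_map_ofReal_add_I_smul _ _ hsym]
    exact sq_le_det_mul_transpose_add_of_coordProj hS hX hN U hy₀.le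
  convert key using 3
  ext i j
  simp [c, d, mul_apply, Matrix.mul_add]
  ring

/-- Lemma 3.2 of the paper: for `y₀ > 1`, `Z = U + i y₀ 1ₙ` with `U` real symmetric,
and `M = (a b; c d)` an integral symplectic matrix with `c ≠ 0`, one has
`|det(c Z + d)| ≥ y₀`. -/
theorem stmt_0 (n : ℕ) (hn : 1 ≤ n) (y₀ : ℝ) (hy₀ : 1 < y₀)
    (U : Matrix (Fin n) (Fin n) ℝ) (hU : U.IsSymm)
    (M : Matrix (Fin n ⊕ Fin n) (Fin n ⊕ Fin n) ℤ)
    (hM : M * Matrix.fromBlocks 0 (-1) 1 0 * M.transpose =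
      Matrix.fromBlocks (0 : Matrix (Fin n) (Fin n) ℤ) (-1) 1 0)
    (hc : M.toBlocks₂₁ ≠ 0) :
    y₀ ≤ ‖
      (((M.toBlocks₂₁.map (fun x : ℤ => (x : ℂ))) *
          (U.map (fun x : ℝ => (x : ℂ)) + ((y₀ : ℂ) * Complex.I) • (1 : Matrix (Fin n) (Fin n) ℂ)) +
        M.toBlocks₂₂.map (fun x : ℤ => (x : ℂ))).det)‖ :=
  stmt_0_general n y₀ hy₀ U hU M hM hc
end

section
/- Let n ≥ 1, let A be a real symmetric n×n matrix and let B be a real symmetric positive definite n×n matrix. Then |det(A + i·B)| ≥ det(B), where A + i·B is regarded as a complex n×n matrix and |·| is the complex absolute value. -/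
/-! Write `B = Sᴴ S`. When `S` is invertible, `A + iB = Sᴴ (M + i) S` with `M = S⁻ᴴ A S⁻¹`
Hermitian, so `|det (A + iB)| = |det S|² · |det (M + i)| = det B · ∏ⱼ |λⱼ + i|`, where the `λⱼ`
are the real eigenvalues of `M`; every factor `|λⱼ + i|` is at least `|Im (λⱼ + i)| = 1`. -/

open Matrix Complex

namespace Matrix

variable {n : Type*} [Fintype n] [DecidableEq n]

theorem IsHermitian.det_add_I_smul_one {M : Matrix n n ℂ} (hM : M.IsHermitian) :
    (M + I • 1).det = ∏ i, ((hM.eigenvalues i : ℂ) + I) := by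
  have h := M.eval_charpoly (-I)
  rw [hM.charpoly_eq, Polynomial.eval_prod] at h
  have hneg : M + I • 1 = -(scalar n (-I) - M) := by
    rw [neg_sub, scalar_apply, ← smul_one_eq_diagonal, neg_smul, sub_neg_eq_add]
  rw [hneg, det_neg, ← h, ← Finset.card_univ, ← Finset.prod_const, ← Finset.prod_mul_distrib]
  simp

theorem IsHermitian.one_le_norm_det_add_I_smul_one {M : Matrix n n ℂ} (hM : M.IsHermitian) :
    1 ≤ ‖(M + I • 1).det‖ := by
  rw [hM.det_add_I_smul_one, norm_prod]
  refine Finset.one_le_prod fun i _ => ?_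
  simpa using abs_im_le_norm ((hM.eigenvalues i : ℂ) + I)

theorem IsHermitian.norm_det_conjTranspose_mul_self_le {A : Matrix n n ℂ} (hA : A.IsHermitian)
    (S : Matrix n n ℂ) : ‖(Sᴴ * S).det‖ ≤ ‖(A + I • (Sᴴ * S)).det‖ := by
  have hdet : ‖(Sᴴ * S).det‖ = ‖S.det‖ ^ 2 := by
    rw [det_mul, det_conjTranspose, norm_mul, norm_star, sq]
  rcases eq_or_ne S.det 0 with hS | hS
  · rw [hdet, hS, norm_zero, zero_pow two_ne_zero]
    exact norm_nonneg _
  set M := (S⁻¹)ᴴ * A * S⁻¹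
  have hM : M.IsHermitian := isHermitian_conjTranspose_mul_mul _ hA
  have hSinv : S⁻¹ * S = 1 := nonsing_inv_mul S hS.isUnit
  have hSinvH : Sᴴ * (S⁻¹)ᴴ = 1 := by rw [← conjTranspose_mul, hSinv, conjTranspose_one]
  have hcongr : A + I • (Sᴴ * S) = Sᴴ * (M + I • 1) * S := by
    simp only [M, Matrix.mul_add, Matrix.add_mul, Matrix.mul_smul, Matrix.smul_mul,
      Matrix.mul_one, ← Matrix.mul_assoc, hSinvH, Matrix.one_mul]
    rw [Matrix.mul_assoc _ _ S, hSinv, Matrix.mul_one]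
  rw [hdet, hcongr, det_mul, det_mul, det_conjTranspose, norm_mul, norm_mul, norm_star]
  calc ‖S.det‖ ^ 2 = ‖S.det‖ * 1 * ‖S.det‖ := by ring
    _ ≤ ‖S.det‖ * ‖(M + I • 1).det‖ * ‖S.det‖ := by
      gcongr
      exact hM.one_le_norm_det_add_I_smul_one

open scoped MatrixOrder ComplexOrder in
theorem PosSemidef.exists_eq_conjTranspose_mul_self {𝕜 : Type*} [RCLike 𝕜] {B : Matrix n n 𝕜}
    (hB : B.PosSemidef) : ∃ S : Matrix n n 𝕜, B = Sᴴ * S :=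
  CStarAlgebra.nonneg_iff_eq_star_mul_self.mp hB.nonneg

end Matrix

theorem stmt_1_general (n : ℕ) (A B : Matrix (Fin n) (Fin n) ℝ)
    (hA : A.IsSymm) (hB : B.PosDef) :
    B.det ≤ ‖
      ((A.map (fun x : ℝ => (x : ℂ)) + Complex.I • B.map (fun x : ℝ => (x : ℂ))).det)‖ := by
  obtain ⟨S, rfl⟩ := hB.posSemidef.exists_eq_conjTranspose_mul_self
  have hofReal : Function.Semiconj (fun x : ℝ => (x : ℂ)) star star :=
    fun x => (conj_ofReal x).symm
  have hA' : (A.map (fun x : ℝ => (x : ℂ))).IsHermitian :=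
    (isHermitian_iff_isSymm.mpr hA).map _ hofReal
  have hmap : (Sᴴ * S).map (fun x : ℝ => (x : ℂ)) = (S.map ofReal)ᴴ * S.map ofReal := by
    rw [← conjTranspose_map _ hofReal]
    exact Matrix.map_mul (f := ofRealHom)
  calc (Sᴴ * S).det ≤ ‖((Sᴴ * S).det : ℂ)‖ := by rw [norm_real]; exact le_abs_self _
    _ = ‖((Sᴴ * S).map ofReal).det‖ := congrArg norm (ofRealHom.map_det _)
    _ ≤ _ := by rw [hmap]; exact hA'.norm_det_conjTranspose_mul_self_le _

/-- The standard inequality `|det(A + iB)| ≥ det B` for `A` real symmetric and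
`B` real symmetric positive definite, invoked in the proof of Lemma 3.2 of the paper. -/
theorem stmt_1 (n : ℕ) (hn : 1 ≤ n) (A B : Matrix (Fin n) (Fin n) ℝ)
    (hA : A.IsSymm) (hB : B.PosDef) :
    B.det ≤ ‖
      ((A.map (fun x : ℝ => (x : ℂ)) + Complex.I • B.map (fun x : ℝ => (x : ℂ))).det)‖ :=
  stmt_1_general n A B hA hB
end

section
/- Let α, β ∈ ℝ and ε ∈ (0, 1/2). There exist constants C > 0 and ℓ₀ ≥ 2, depending only on α, β, ε, such that the following holds: for every real ℓ ≥ ℓ₀, every positive integer N, every integer a, and every real v′ > 0 such that v := 2Nv′ satisfies v ≥ ℓ^{1/2+ε}, one has Q₁(ℓ, α, β, N, a, v′) ≤ C · v^β · ℓ^{α−β+1/4} · N^{−β}. -/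
/-!
Put `p = 4πv′` and `t = pD/ℓ`. Up to the factor `ℓ^α (ℓ/p)^{-β}`, the `D`-th term of `Q₁` is
`(ℓt)^{ℓ/2} e^{-ℓt/2} t^{-β} / √Γ(ℓ)`. Integrating the Gamma integrand over `(ℓ - √ℓ, ℓ]` gives
`Γ(ℓ) ≥ e^{-2} ℓ^{ℓ-1/2} e^{-ℓ}`, so for `4|β| ≤ ℓ` this is `≪ ℓ^{1/4} exp(-(ℓ/4)(t - 1 - log t))`.
As `t - 1 - log t ≥ |t - 1|² / (2|t - 1| + 4)` and `v ≥ √ℓ`, the exponent is at least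
`|D - ℓ/p| / N - 1`. The numbers `(D - ℓ/p)/N` for `D ≡ a (mod N)` are `1`-separated, so their
`exp(-|·|)` sum to at most `4`; what remains is `ℓ^{1/4} (ℓ/p)^{-β} ℓ^α = (2π)^β v^β ℓ^{α-β+1/4} N^{-β}`.
-/

open Real

/-- The quantity `Q₁(ℓ, α, β, N, a, v′)` of Lemma 4.3 of the paper:
`Σ_{D ≥ 1, D ≡ a (mod N)} (4π v′ D)^{ℓ/2} Γ(ℓ)^{−1/2} exp(−2π v′ D) ℓ^α D^{−β}`. -/
noncomputable def Q1 (l α β : ℝ) (N : ℕ) (a : ℤ) (v' : ℝ) : ℝ :=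
  ∑' D : ℕ, if 0 < D ∧ (D : ℤ) ≡ a [ZMOD (N : ℤ)] then
    (4 * π * v' * D) ^ (l / 2) * (Real.Gamma l) ^ (-(1 : ℝ) / 2) *
      Real.exp (-2 * π * v' * D) * l ^ α * (D : ℝ) ^ (-β)
  else 0

open Finset MeasureTheory

lemma log_le_two_mul_sqrt_sub_one {t : ℝ} (ht : 0 < t) : log t ≤ 2 * (√t - 1) := by
  have h := log_le_sub_one_of_pos (sqrt_pos.2 ht)
  rw [log_sqrt ht.le] at h
  linarith

lemma sq_sqrt_sub_one_le {t : ℝ} (ht : 0 < t) : (√t - 1) ^ 2 ≤ t - 1 - log t := by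
  nlinarith [log_le_two_mul_sqrt_sub_one ht, sq_sqrt ht.le]

lemma abs_log_le {t : ℝ} (ht : 0 < t) : |log t| ≤ t - 1 - log t + 1 := by
  rw [abs_le]
  constructor
  · linarith
  · nlinarith [log_le_two_mul_sqrt_sub_one ht, sq_sqrt ht.le, sq_nonneg (√t - 2)]

lemma sq_abs_sub_one_le {t : ℝ} (ht : 0 < t) :
    |t - 1| ^ 2 ≤ (t - 1 - log t) * (2 * |t - 1| + 4) := by
  have hs := sq_sqrt ht.le
  have hφ : 0 ≤ t - 1 - log t := by linarith [log_le_sub_one_of_pos ht]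
  have hsum : (√t + 1) ^ 2 ≤ 2 * |t - 1| + 4 := by
    nlinarith [sqrt_nonneg t, sq_nonneg (√t - 1), le_abs_self (t - 1)]
  calc |t - 1| ^ 2 = (√t - 1) ^ 2 * (√t + 1) ^ 2 := by rw [sq_abs]; nth_rewrite 1 [← hs]; ring
    _ ≤ (t - 1 - log t) * (2 * |t - 1| + 4) :=
      mul_le_mul (sq_sqrt_sub_one_le ht) hsum (sq_nonneg _) hφ

lemma abs_sub_one_le {t c δ : ℝ} (ht : 0 < t) (hδ : 0 < δ) (hcδ : 1 + 2 * δ ≤ c * δ ^ 2) :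
    |t - 1| ≤ δ * (c * (t - 1 - log t) + 1) := by
  have hq := sq_abs_sub_one_le ht
  set a := |t - 1|
  have ha : 0 ≤ a := abs_nonneg _
  have hc : 0 ≤ c * δ := by nlinarith
  -- after multiplication by `δ`, this is `(a - 2δ)² + 2δ²a ≥ 0`
  have hquad : a * (2 * a + 4) ≤ c * δ * a ^ 2 + δ * (2 * a + 4) := by
    refine le_of_mul_le_mul_left ?_ hδ
    nlinarith [sq_nonneg (a - 2 * δ), mul_nonneg (mul_nonneg hδ.le hδ.le) ha,
      mul_le_mul_of_nonneg_right hcδ (sq_nonneg a)]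
  refine le_of_mul_le_mul_right ?_ (by positivity : 0 < 2 * a + 4)
  nlinarith [mul_le_mul_of_nonneg_left hq hc]

lemma sum_exp_neg_le_two {ι : Type*} (s : Finset ι) (g : ι → ℝ) (hg : ∀ i ∈ s, 0 ≤ g i)
    (hsep : ∀ i ∈ s, ∀ j ∈ s, i ≠ j → 1 ≤ |g i - g j|) : ∑ i ∈ s, exp (-g i) ≤ 2 := by
  have hinj : Set.InjOn (fun i => ⌊g i⌋₊) s := by
    intro i hi j hj hij
    by_contra hne
    have hfloor : ⌊g i⌋ = ⌊g j⌋ := by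
      rw [← Int.natCast_floor_eq_floor (hg i hi), ← Int.natCast_floor_eq_floor (hg j hj)]
      exact congrArg _ hij
    linarith [hsep i hi j hj hne, Int.abs_sub_lt_one_of_floor_eq_floor hfloor]
  have hterm : ∀ i ∈ s, exp (-g i) ≤ (1 / 2 : ℝ) ^ ⌊g i⌋₊ := fun i hi =>
    calc exp (-g i) ≤ exp (-1) ^ ⌊g i⌋₊ := by
          rw [← exp_nat_mul]; exact exp_le_exp.2 (by linarith [Nat.floor_le (hg i hi)])
      _ ≤ (1 / 2 : ℝ) ^ ⌊g i⌋₊ := pow_le_pow_left₀ (exp_pos _).le exp_neg_one_lt_half.le _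
  calc ∑ i ∈ s, exp (-g i) ≤ ∑ i ∈ s, (1 / 2 : ℝ) ^ ⌊g i⌋₊ := sum_le_sum hterm
    _ = ∑ k ∈ s.image (fun i => ⌊g i⌋₊), (1 / 2 : ℝ) ^ k := (sum_image hinj).symm
    _ ≤ ∑' k : ℕ, (1 / 2 : ℝ) ^ k :=
        Summable.sum_le_tsum _ (fun _ _ => by positivity) summable_geometric_two
    _ = 2 := tsum_geometric_two

lemma sum_exp_neg_abs_le_four {ι : Type*} (s : Finset ι) (g : ι → ℝ)
    (hsep : ∀ i ∈ s, ∀ j ∈ s, i ≠ j → 1 ≤ |g i - g j|) : ∑ i ∈ s, exp (-|g i|) ≤ 4 := by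
  have half : ∀ t ⊆ s, (∀ i ∈ t, ∀ j ∈ t, |g i| - |g j| = g i - g j ∨ |g i| - |g j| = g j - g i) →
      ∑ i ∈ t, exp (-|g i|) ≤ 2 := fun t ht hsign =>
    sum_exp_neg_le_two t (|g ·|) (fun _ _ => abs_nonneg _) fun i hi j hj hne => by
      rcases hsign i hi j hj with h | h <;> rw [h]
      · exact hsep i (ht hi) j (ht hj) hne
      · rw [abs_sub_comm]; exact hsep i (ht hi) j (ht hj) hne
  rw [← sum_filter_add_sum_filter_not s (0 ≤ g ·)]
  have hpos := half (s.filter (0 ≤ g ·)) (filter_subset _ _) fun i hi j hj => by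
    simp only [mem_filter] at hi hj
    left; rw [abs_of_nonneg hi.2, abs_of_nonneg hj.2]
  have hneg := half (s.filter (¬0 ≤ g ·)) (filter_subset _ _) fun i hi j hj => by
    simp only [mem_filter, not_le] at hi hj
    right; rw [abs_of_neg hi.2, abs_of_neg hj.2]; ring
  linarith

lemma exp_neg_mul_rpow_ge_of_mem_Ioc {l x : ℝ} (hl : 4 ≤ l) (hx : x ∈ Set.Ioc (l - √l) l) :
    exp (-2) * (exp (-l) * l ^ (l - 1)) ≤ exp (-x) * x ^ (l - 1) := by
  obtain ⟨hlx, hxl⟩ := hx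
  have hsq := sq_sqrt (by linarith : 0 ≤ l)
  have hsqrt : √l ≤ l / 2 := by nlinarith [sqrt_nonneg l]
  have hx0 : 0 < x := by linarith
  have hlog : log l - log x ≤ (l - x) / x := by
    rw [← log_div (by linarith) hx0.ne', sub_div, div_self hx0.ne']
    exact log_le_sub_one_of_pos (by positivity)
  -- `0 ≤ l - x < √l` and `x ≥ l / 2`, so `(l - 1)(l - x) ≤ x (l - x) + (l - x)² ≤ x (l - x) + 2x`
  have hkey : (l - 1) * (log l - log x) ≤ l - x + 2 :=
    calc (l - 1) * (log l - log x) ≤ (l - 1) * ((l - x) / x) :=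
          mul_le_mul_of_nonneg_left hlog (by linarith)
      _ ≤ l - x + 2 := by rw [mul_div_assoc', div_le_iff₀ hx0]; nlinarith
  rw [rpow_def_of_pos hx0, rpow_def_of_pos (by linarith), ← exp_add, ← exp_add, ← exp_add,
    exp_le_exp]
  linarith

lemma rpow_mul_exp_neg_le_Gamma {l : ℝ} (hl : 4 ≤ l) :
    l ^ l * exp (-l) ≤ exp 2 * √l * Gamma l := by
  have hl0 : 0 < l := by linarith
  have hsqrt : √l ≤ l / 2 := by nlinarith [sq_sqrt hl0.le, sqrt_nonneg l]
  set f := fun x : ℝ => exp (-x) * x ^ (l - 1)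
  have hint : IntegrableOn f (Set.Ioi 0) := GammaIntegral_convergent hl0
  have hsub : Set.Ioc (l - √l) l ⊆ Set.Ioi 0 := fun x hx => by
    simp only [Set.mem_Ioc, Set.mem_Ioi] at hx ⊢; linarith [hx.1]
  have hvol : volume.real (Set.Ioc (l - √l) l) = √l := by
    rw [Real.volume_real_Ioc_of_le (by linarith [sqrt_nonneg l])]; ring
  have hpeak : exp (-2) * (exp (-l) * l ^ (l - 1)) * √l ≤ Gamma l := by
    rw [Gamma_eq_integral hl0, ← hvol]
    calc _ ≤ ∫ x in Set.Ioc (l - √l) l, f x :=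
          setIntegral_ge_of_const_le_real measurableSet_Ioc (by simp)
            (fun x hx => exp_neg_mul_rpow_ge_of_mem_Ioc hl hx) (hint.mono_set hsub)
      _ ≤ ∫ x in Set.Ioi 0, f x :=
          setIntegral_mono_set hint
            ((ae_restrict_iff' measurableSet_Ioi).2 (.of_forall fun x (hx : 0 < x) => by positivity))
            (.of_forall hsub)
  have hpow : l ^ l = l ^ (l - 1) * √l * √l := by
    rw [mul_assoc, mul_self_sqrt hl0.le, ← rpow_add_one hl0.ne']; ring_nf
  have he : exp 2 * exp (-2) = 1 := by rw [← exp_add]; norm_num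
  calc l ^ l * exp (-l) = exp 2 * √l * (exp (-2) * (exp (-l) * l ^ (l - 1)) * √l) := by
        rw [hpow]; linear_combination (l ^ (l - 1) * √l * √l * exp (-l)) * he.symm
    _ ≤ exp 2 * √l * Gamma l := by gcongr

lemma log_Gamma_ge {l : ℝ} (hl : 4 ≤ l) : l * log l - l - 2 - log l / 2 ≤ log (Gamma l) := by
  have hl0 : 0 < l := by linarith
  have h := log_le_log (by positivity) (rpow_mul_exp_neg_le_Gamma hl)
  rw [log_mul (by positivity) (exp_pos _).ne', log_exp, log_rpow hl0,
    log_mul (by positivity) (Gamma_pos_of_pos hl0).ne', log_mul (exp_pos _).ne' (by positivity),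
    log_exp, log_sqrt hl0.le] at h
  linarith

/-- By `log_Gamma_ge` the left side without `t^{-β}` is at most `e l^{1/4} exp(-(l/2) φ(t))`,
`φ(t) = t - 1 - log t`; half of that decay absorbs `t^{-β}`. -/
lemma rpow_mul_Gamma_mul_exp_le {l β t : ℝ} (hl : 4 ≤ l) (hβ : 4 * |β| ≤ l) (ht : 0 < t) :
    (l * t) ^ (l / 2) * Gamma l ^ (-(1 : ℝ) / 2) * exp (-(l * t) / 2) * t ^ (-β) ≤
      exp (1 + |β|) * l ^ ((1 : ℝ) / 4) * exp (-(l / 4) * (t - 1 - log t)) := by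
  have hl0 : 0 < l := by linarith
  have hG := log_Gamma_ge hl
  have hβlog : -β * log t ≤ |β| * (t - 1 - log t + 1) :=
    calc -β * log t ≤ |β| * |log t| := by rw [← abs_neg β, ← abs_mul]; exact le_abs_self _
      _ ≤ |β| * (t - 1 - log t + 1) := mul_le_mul_of_nonneg_left (abs_log_le ht) (abs_nonneg β)
  have hφ : |β| * (t - 1 - log t) ≤ l / 4 * (t - 1 - log t) :=
    mul_le_mul_of_nonneg_right (by linarith) (by linarith [log_le_sub_one_of_pos ht])
  rw [rpow_def_of_pos (by positivity), rpow_def_of_pos (Gamma_pos_of_pos hl0),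
    rpow_def_of_pos ht, rpow_def_of_pos hl0, log_mul hl0.ne' ht.ne']
  simp only [← exp_add, exp_le_exp]
  linarith

lemma Q1_summand_le {l β p c x : ℝ} (hl : 4 ≤ l) (hβ : 4 * |β| ≤ l) (hp : 0 < p) (hc : 0 < c)
    (hx : 0 < x) (hcp : 1 + 2 * (c * p / l) ≤ l / 4 * (c * p / l) ^ 2) :
    (p * x) ^ (l / 2) * Gamma l ^ (-(1 : ℝ) / 2) * exp (-(p * x) / 2) * x ^ (-β) ≤
      exp (2 + |β|) * l ^ ((1 : ℝ) / 4) * (l / p) ^ (-β) * exp (-|(x - l / p) / c|) := by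
  have hl0 : 0 < l := by linarith
  obtain ⟨t, ht, rfl⟩ : ∃ t, 0 < t ∧ x = l / p * t := ⟨p * x / l, by positivity, by field_simp⟩
  have hpx : p * (l / p * t) = l * t := by field_simp
  set A := |(l / p * t - l / p) / c|
  have hdecay : -(l / 4) * (t - 1 - log t) ≤ 1 - A := by
    have hA : A = |t - 1| / (c * p / l) := by
      rw [← abs_of_pos (show 0 < c * p / l by positivity), ← abs_div]
      simp only [A]; congr 1; field_simp
    have := (div_le_iff₀' (by positivity)).2 (abs_sub_one_le ht (by positivity) hcp)
    rw [← hA] at this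
    linarith
  have hexp : exp (1 + |β|) * exp (1 - A) = exp (2 + |β|) * exp (-A) := by
    rw [← exp_add, ← exp_add]; ring_nf
  calc (p * (l / p * t)) ^ (l / 2) * Gamma l ^ (-(1 : ℝ) / 2) * exp (-(p * (l / p * t)) / 2) *
        (l / p * t) ^ (-β)
      = (l / p) ^ (-β) * ((l * t) ^ (l / 2) * Gamma l ^ (-(1 : ℝ) / 2) * exp (-(l * t) / 2) *
          t ^ (-β)) := by
        rw [hpx, mul_rpow (x := l / p) (by positivity) ht.le]; ring
    _ ≤ (l / p) ^ (-β) * (exp (1 + |β|) * l ^ ((1 : ℝ) / 4) * exp (1 - A)) := by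
        refine mul_le_mul_of_nonneg_left ?_ (by positivity)
        exact (rpow_mul_Gamma_mul_exp_le hl hβ ht).trans (by gcongr)
    _ = exp (2 + |β|) * l ^ ((1 : ℝ) / 4) * (l / p) ^ (-β) * exp (-A) := by
        linear_combination (l / p) ^ (-β) * l ^ ((1 : ℝ) / 4) * hexp

lemma natCast_le_abs_sub_of_modEq {N : ℕ} {x y : ℤ} (h : x ≡ y [ZMOD N]) (hne : x ≠ y) :
    (N : ℝ) ≤ |(x : ℝ) - y| := by
  have := Int.le_of_dvd (abs_pos.2 (sub_ne_zero.2 hne)) ((dvd_abs _ _).2 h.symm.dvd)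
  exact_mod_cast this

lemma tsum_ite_modEq_le {f : ℕ → ℝ} {N : ℕ} {a : ℤ} {K x₀ : ℝ} (hN : 0 < N) (hK : 0 ≤ K)
    (hf : ∀ D : ℕ, 0 < D → f D ≤ K * exp (-|((D : ℝ) - x₀) / N|)) :
    ∑' D : ℕ, (if 0 < D ∧ (D : ℤ) ≡ a [ZMOD (N : ℤ)] then f D else 0) ≤ 4 * K := by
  have hN0 : (0 : ℝ) < N := by exact_mod_cast hN
  refine tsum_le_of_sum_le' (by positivity) fun s => ?_
  rw [← sum_filter]
  set S := s.filter fun D : ℕ => 0 < D ∧ (D : ℤ) ≡ a [ZMOD (N : ℤ)]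
  have hsep : ∀ D ∈ S, ∀ D' ∈ S, D ≠ D' → 1 ≤ |((D : ℝ) - x₀) / N - ((D' : ℝ) - x₀) / N| :=
    fun D hD D' hD' hne => by
      have h := natCast_le_abs_sub_of_modEq
        ((mem_filter.1 hD).2.2.trans (mem_filter.1 hD').2.2.symm) (by exact_mod_cast hne)
      rw [← sub_div, sub_sub_sub_cancel_right, abs_div, abs_of_pos hN0, le_div_iff₀ hN0, one_mul]
      exact_mod_cast h
  calc ∑ D ∈ S, f D ≤ ∑ D ∈ S, K * exp (-|((D : ℝ) - x₀) / N|) :=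
        sum_le_sum fun D hD => hf D (mem_filter.1 hD).2.1
    _ ≤ 4 * K := by
        rw [← mul_sum, mul_comm 4]
        exact mul_le_mul_of_nonneg_left (sum_exp_neg_abs_le_four _ _ hsep) hK

lemma one_add_two_mul_le_of_rpow_le {l v ε : ℝ} (hl : 16 ≤ l) (hε : 0 ≤ ε)
    (hv : l ^ (1 / 2 + ε) ≤ v) : 1 + 2 * (2 * π * v / l) ≤ l / 4 * (2 * π * v / l) ^ 2 := by
  have hl0 : 0 < l := by linarith
  have hsqrt : √l ≤ v := by
    rw [sqrt_eq_rpow]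
    exact (rpow_le_rpow_of_exponent_le (by linarith) (by linarith)).trans hv
  have hlv : l ≤ v ^ 2 := by nlinarith [sq_sqrt hl0.le, sqrt_nonneg l]
  have hv4 : 4 ≤ v := by nlinarith [sqrt_nonneg l]
  have key : l + 4 * π * v ≤ π ^ 2 * v ^ 2 := by
    nlinarith [pi_gt_three, mul_nonneg (mul_nonneg pi_pos.le (by linarith : 0 ≤ v))
      (by linarith : (0 : ℝ) ≤ v - 4),
      mul_nonneg (sq_nonneg v) (by nlinarith [pi_gt_three] : (0 : ℝ) ≤ π ^ 2 - π - 1)]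
  calc 1 + 2 * (2 * π * v / l) = (l + 4 * π * v) / l := by field_simp; ring
    _ ≤ π ^ 2 * v ^ 2 / l := div_le_div_of_nonneg_right key hl0.le
    _ = l / 4 * (2 * π * v / l) ^ 2 := by field_simp; ring

/-- First case of Lemma 4.3 of the paper: if `v := 2 N v′ ≥ ℓ^{1/2+ε}` then
`Q₁ ≪ v^β ℓ^{α−β+1/4} N^{−β}`. -/
theorem stmt_4 (α β ε : ℝ) (hε : ε ∈ Set.Ioo (0 : ℝ) (1 / 2)) :
    ∃ C : ℝ, 0 < C ∧ ∃ ℓ₀ : ℝ, 2 ≤ ℓ₀ ∧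
      ∀ (l : ℝ), ℓ₀ ≤ l → ∀ (N : ℕ), 0 < N → ∀ (a : ℤ) (v' : ℝ), 0 < v' →
        l ^ (1 / 2 + ε) ≤ 2 * N * v' →
        Q1 l α β N a v' ≤ C * (2 * N * v') ^ β * l ^ (α - β + 1 / 4) * (N : ℝ) ^ (-β) := by
  refine ⟨4 * exp (2 + |β|) * (2 * π) ^ β, by positivity, 16 + 4 * |β|,
    by linarith [abs_nonneg β], fun l hl N hN a v' hv' hv => ?_⟩
  have hl16 : 16 ≤ l := by linarith [abs_nonneg β]
  have hl0 : 0 < l := by linarith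
  have hN0 : (0 : ℝ) < N := by exact_mod_cast hN
  set v := 2 * (N : ℝ) * v'
  set p := 4 * π * v'
  have hcp : 1 + 2 * (N * p / l) ≤ l / 4 * (N * p / l) ^ 2 := by
    rw [show N * p / l = 2 * π * v / l by ring]
    exact one_add_two_mul_le_of_rpow_le hl16 hε.1.le hv
  calc Q1 l α β N a v' ≤ 4 * (exp (2 + |β|) * l ^ ((1 : ℝ) / 4) * (l / p) ^ (-β) * l ^ α) := by
        unfold Q1
        refine tsum_ite_modEq_le (x₀ := l / p) hN (by positivity) fun D hD => ?_
        rw [show 4 * π * v' * D = p * D by ring, show -2 * π * v' * D = -(p * D) / 2 by ring,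
          mul_right_comm _ (l ^ α), mul_right_comm _ (l ^ α)]
        exact mul_le_mul_of_nonneg_right (Q1_summand_le (by linarith) (by linarith)
          (by positivity) hN0 (by exact_mod_cast hD) hcp) (by positivity)
    _ = 4 * exp (2 + |β|) * (2 * π) ^ β * v ^ β * l ^ (α - β + 1 / 4) * (N : ℝ) ^ (-β) := by
        have hlp : l / p = (2 * π * v * l⁻¹ * (N : ℝ)⁻¹)⁻¹ := by
          simp only [v, p]; field_simp; ring
        rw [hlp, rpow_neg (by positivity), inv_rpow (by positivity), inv_inv,
          mul_rpow (by positivity) (by positivity), mul_rpow (by positivity) (by positivity),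
          mul_rpow (by positivity) (by positivity), inv_rpow hl0.le, inv_rpow hN0.le,
          show α - β + 1 / 4 = α + 1 / 4 - β by ring, rpow_sub hl0, rpow_add hl0, rpow_neg hN0.le]
        field_simp
end

section
/- Let α, β ∈ ℝ and ε ∈ (0, 1/2). There exist constants C > 0 and ℓ₀ ≥ 2, depending only on α, β, ε, such that the following holds: for every real ℓ ≥ ℓ₀, every positive integer N, every integer a, and every real v′ > 0 such that v := 2Nv′ satisfies v ≤ ℓ^{1/2+ε}, one has Q₁(ℓ, α, β, N, a, v′) ≤ C · ℓ^{α−β+3/4+ε} · v^{β−1} · N^{−β} · (1 + v·ℓ^{−1/2}). -/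
open Real

/-!
Put `c = 4πv'` and `p = ℓ/2 - β`. The `D`-th term of `Q₁` is `Γ(ℓ)^{-1/2} ℓ^α c^β f(cD)` with
`f(x) = x^p e^{-x/2}`, which increases up to `2p` and decreases afterwards. The points `cD` with
`D ≡ a (mod N)` are `cN = 2πv` apart, so comparing the sum with an integral bounds it by
`2 f(2p) + (2πv)⁻¹ ∫₀^∞ f = 2 f(2p) + (2πv)⁻¹ 2^{p+1} Γ(p+1)`.
A Stirling-type lower bound for `Γ(p+1)` gives `f(2p) ≪ 2^{p+1} Γ(p+1) / √ℓ`, and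
log-convexity of `Γ` with Legendre's duplication formula gives
`2^{p+1} Γ(p+1) ≪ ℓ^{3/4-β} Γ(ℓ)^{1/2}`; the two terms give the two summands of the bound.
-/

open Set Filter Asymptotics MeasureTheory

section SeparatedSums

theorem mul_le_setIntegral_Ioc {f : ℝ → ℝ} {a δ c : ℝ} (hδ : 0 ≤ δ)
    (hf : IntegrableOn f (Ioc a (a + δ))) (hc : ∀ y ∈ Ioc a (a + δ), c ≤ f y) :
    δ * c ≤ ∫ y in Ioc a (a + δ), f y := by
  have hvol : volume.real (Ioc a (a + δ)) = δ := by simpa [measureReal_def] using hδ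
  calc δ * c = ∫ _ in Ioc a (a + δ), c := by rw [setIntegral_const, hvol, smul_eq_mul]
    _ ≤ ∫ y in Ioc a (a + δ), f y :=
      setIntegral_mono_on (integrableOn_const (by simp)) hf measurableSet_Ioc hc

theorem Ioc_add_disjoint_of_le_abs_sub {a b δ : ℝ} (h : δ ≤ |a - b|) :
    Disjoint (Ioc a (a + δ)) (Ioc b (b + δ)) := by
  rw [Ioc_disjoint_Ioc]
  rcases le_abs.1 h with h | h
  · exact min_le_of_right_le (le_max_of_le_left (by linarith))
  · exact min_le_of_left_le (le_max_of_le_right (by linarith))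

variable {ι : Type*} {f : ℝ → ℝ} {s : Finset ι} {δ : ℝ}

theorem mul_sum_le_setIntegral {S : Set ℝ} (hSm : MeasurableSet S) (hf : IntegrableOn f S)
    (hf0 : ∀ y ∈ S, 0 ≤ f y) (hδ : 0 ≤ δ) {a c : ι → ℝ}
    (hsep : (s : Set ι).Pairwise fun i j ↦ δ ≤ |a i - a j|)
    (hS : ∀ i ∈ s, Ioc (a i) (a i + δ) ⊆ S)
    (hc : ∀ i ∈ s, ∀ y ∈ Ioc (a i) (a i + δ), c i ≤ f y) :
    δ * ∑ i ∈ s, c i ≤ ∫ y in S, f y :=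
  calc δ * ∑ i ∈ s, c i = ∑ i ∈ s, δ * c i := Finset.mul_sum _ _ _
    _ ≤ ∑ i ∈ s, ∫ y in Ioc (a i) (a i + δ), f y :=
        Finset.sum_le_sum fun i hi ↦ mul_le_setIntegral_Ioc hδ (hf.mono_set (hS i hi)) (hc i hi)
    _ = ∫ y in ⋃ i ∈ s, Ioc (a i) (a i + δ), f y :=
        (integral_biUnion_finset s (s := fun i ↦ Ioc (a i) (a i + δ)) (fun _ _ ↦ measurableSet_Ioc)
          (hsep.mono' fun _ _ ↦ Ioc_add_disjoint_of_le_abs_sub)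
          fun i hi ↦ hf.mono_set (hS i hi)).symm
    _ ≤ ∫ y in S, f y :=
        setIntegral_mono_set hf (ae_restrict_of_forall_mem hSm hf0)
          (iUnion₂_subset hS).eventuallyLE

/-- At most one point lies within `δ` of the peak `x₀`, and it is bounded by `f x₀`; every other
point `x` has `δ f(x) ≤ ∫_{(x, x + δ]} f`. -/
theorem sum_le_of_monotoneOn {x₀ : ℝ} (hδ : 0 < δ) (hmono : MonotoneOn f (Ioc 0 x₀))
    (hf : IntegrableOn f (Ioc 0 x₀)) (hf0 : ∀ y ∈ Ioc 0 x₀, 0 ≤ f y) (hfx₀ : 0 ≤ f x₀)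
    {x : ι → ℝ} (hx : ∀ i ∈ s, x i ∈ Ioc 0 x₀)
    (hsep : (s : Set ι).Pairwise fun i j ↦ δ ≤ |x i - x j|) :
    ∑ i ∈ s, f (x i) ≤ f x₀ + (∫ y in Ioc 0 x₀, f y) / δ := by
  classical
  rw [← Finset.sum_filter_not_add_sum_filter s (fun i ↦ x i + δ ≤ x₀)]
  gcongr
  · have hcard : (s.filter fun i ↦ ¬x i + δ ≤ x₀).card ≤ 1 := by
      refine Finset.card_le_one.2 fun i hi j hj ↦ by_contra fun hij ↦ ?_
      simp only [Finset.mem_filter, not_le] at hi hj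
      have hxi := (hx i hi.1).2
      have hxj := (hx j hj.1).2
      rcases le_abs.1 (hsep hi.1 hj.1 hij) with h | h <;> linarith
    calc ∑ i ∈ s.filter _, f (x i) ≤ (s.filter fun i ↦ ¬x i + δ ≤ x₀).card • f x₀ :=
          Finset.sum_le_card_nsmul _ _ _ fun i hi ↦
            have hi := hx i (Finset.mem_of_mem_filter i hi)
            hmono hi ⟨hi.1.trans_le hi.2, le_rfl⟩ hi.2
      _ ≤ 1 • f x₀ := by gcongr
      _ = f x₀ := one_nsmul _
  · have hsub : ∀ i ∈ s.filter (fun i ↦ x i + δ ≤ x₀), Ioc (x i) (x i + δ) ⊆ Ioc 0 x₀ :=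
      fun i hi y hy ↦
        ⟨(hx i (Finset.mem_of_mem_filter i hi)).1.trans hy.1, hy.2.trans (Finset.mem_filter.1 hi).2⟩
    rw [le_div_iff₀ hδ, mul_comm]
    exact mul_sum_le_setIntegral measurableSet_Ioc hf hf0 hδ.le
      (hsep.mono (Finset.coe_subset.2 (Finset.filter_subset _ _))) hsub
      fun i hi y hy ↦ hmono (hx i (Finset.mem_of_mem_filter i hi)) (hsub i hi hy) hy.1.le

theorem sum_le_of_antitoneOn {x₀ : ℝ} (hδ : 0 < δ) (hanti : AntitoneOn f (Ici x₀))
    (hf : IntegrableOn f (Ioi x₀)) (hf0 : ∀ y ∈ Ioi x₀, 0 ≤ f y) (hfx₀ : 0 ≤ f x₀)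
    {x : ι → ℝ} (hx : ∀ i ∈ s, x₀ < x i)
    (hsep : (s : Set ι).Pairwise fun i j ↦ δ ≤ |x i - x j|) :
    ∑ i ∈ s, f (x i) ≤ f x₀ + (∫ y in Ioi x₀, f y) / δ := by
  classical
  rw [← Finset.sum_filter_not_add_sum_filter s (fun i ↦ x₀ + δ ≤ x i)]
  gcongr
  · have hcard : (s.filter fun i ↦ ¬x₀ + δ ≤ x i).card ≤ 1 := by
      refine Finset.card_le_one.2 fun i hi j hj ↦ by_contra fun hij ↦ ?_
      simp only [Finset.mem_filter, not_le] at hi hj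
      have hxi := hx i hi.1
      have hxj := hx j hj.1
      rcases le_abs.1 (hsep hi.1 hj.1 hij) with h | h <;> linarith
    calc ∑ i ∈ s.filter _, f (x i) ≤ (s.filter fun i ↦ ¬x₀ + δ ≤ x i).card • f x₀ :=
          Finset.sum_le_card_nsmul _ _ _ fun i hi ↦
            have hi := (hx i (Finset.mem_of_mem_filter i hi)).le
            hanti self_mem_Ici hi hi
      _ ≤ 1 • f x₀ := by gcongr
      _ = f x₀ := one_nsmul _
  · have hsub : ∀ i ∈ s.filter (fun i ↦ x₀ + δ ≤ x i), Ioc (x i - δ) (x i - δ + δ) ⊆ Ioi x₀ :=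
      fun i hi y hy ↦ mem_Ioi.2 (by linarith [hy.1, (Finset.mem_filter.1 hi).2])
    rw [le_div_iff₀ hδ, mul_comm]
    refine mul_sum_le_setIntegral measurableSet_Ioi hf hf0 hδ.le ?_ hsub
      fun i hi y hy ↦ hanti (Ioi_subset_Ici_self (hsub i hi hy))
        (hx i (Finset.mem_of_mem_filter i hi)).le (by linarith [hy.2])
    refine (hsep.mono (Finset.coe_subset.2 (Finset.filter_subset _ _))).mono' fun i j h ↦ ?_
    rwa [sub_sub_sub_cancel_right]

theorem sum_le_two_mul_add_integral_div {x₀ : ℝ} (hδ : 0 < δ) (hx₀ : 0 < x₀)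
    (hmono : MonotoneOn f (Ioc 0 x₀)) (hanti : AntitoneOn f (Ici x₀))
    (hf : IntegrableOn f (Ioi 0)) (hf0 : ∀ y ∈ Ioi 0, 0 ≤ f y)
    {x : ι → ℝ} (hx : ∀ i ∈ s, 0 < x i)
    (hsep : (s : Set ι).Pairwise fun i j ↦ δ ≤ |x i - x j|) :
    ∑ i ∈ s, f (x i) ≤ 2 * f x₀ + (∫ y in Ioi 0, f y) / δ := by
  classical
  have hfx₀ := hf0 x₀ hx₀
  have hsplit : ∫ y in Ioi 0, f y = (∫ y in Ioc 0 x₀, f y) + ∫ y in Ioi x₀, f y := by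
    rw [← setIntegral_union (Ioc_disjoint_Ioi le_rfl) measurableSet_Ioi
      (hf.mono_set Ioc_subset_Ioi_self) (hf.mono_set (Ioi_subset_Ioi hx₀.le)),
      Ioc_union_Ioi_eq_Ioi hx₀.le]
  rw [← Finset.sum_filter_add_sum_filter_not s (fun i ↦ x i ≤ x₀), hsplit, add_div]
  have hleft := sum_le_of_monotoneOn hδ hmono (hf.mono_set Ioc_subset_Ioi_self)
    (fun y hy ↦ hf0 y hy.1) hfx₀ (s := s.filter fun i ↦ x i ≤ x₀) (x := x)
    (fun i hi ↦ ⟨hx i (Finset.mem_of_mem_filter i hi), (Finset.mem_filter.1 hi).2⟩)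
    (hsep.mono (Finset.coe_subset.2 (Finset.filter_subset _ _)))
  have hright := sum_le_of_antitoneOn hδ hanti (hf.mono_set (Ioi_subset_Ioi hx₀.le))
    (fun y hy ↦ hf0 y (hx₀.trans hy)) hfx₀ (s := s.filter fun i ↦ ¬x i ≤ x₀) (x := x)
    (fun i hi ↦ not_le.1 (Finset.mem_filter.1 hi).2)
    (hsep.mono (Finset.coe_subset.2 (Finset.filter_subset _ _)))
  linarith

end SeparatedSums

namespace Real

theorem pow_mul_Gamma_le_Gamma_add_nat {x : ℝ} (hx : 0 < x) (n : ℕ) :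
    x ^ n * Gamma x ≤ Gamma (x + n) := by
  induction n with
  | zero => simp
  | succ n ih =>
    rw [Nat.cast_succ, ← add_assoc, Gamma_add_one (by positivity), pow_succ', mul_assoc]
    exact mul_le_mul (by simp) ih (by positivity) (by positivity)

theorem Gamma_add_nat_le {x : ℝ} {n : ℕ} (hn : (n : ℝ) ≤ x) :
    Gamma (x + n) ≤ (2 * x) ^ n * Gamma x := by
  induction n with
  | zero => simp
  | succ n ih =>
    push_cast at hn
    have hx : 0 < x := by linarith [n.cast_nonneg (α := ℝ)]
    rw [Nat.cast_succ, ← add_assoc, Gamma_add_one (by positivity), pow_succ', mul_assoc]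
    gcongr
    · linarith
    · exact ih (by linarith)

/-- Log-convexity interpolates between `Γ(x)` and `Γ(x + ⌈γ⌉)`. -/
theorem Gamma_add_le_of_nonneg {x γ : ℝ} (hx : 0 < x) (hγ : 0 ≤ γ) (hγx : (⌈γ⌉₊ : ℝ) ≤ x) :
    Gamma (x + γ) ≤ (2 * x) ^ γ * Gamma x := by
  set n := ⌈γ⌉₊
  set t := γ / n
  have hγn : γ = t * n := by
    rcases eq_or_ne n 0 with h | h
    · have : γ = 0 := le_antisymm (Nat.ceil_eq_zero.1 h) hγ
      simp [t, h, this]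
    · exact (div_mul_cancel₀ γ (by exact_mod_cast h)).symm
  have ht0 : 0 ≤ t := by positivity
  have ht1 : t ≤ 1 := div_le_one_of_le₀ (Nat.le_ceil γ) (by positivity)
  have hconv := convexOn_log_Gamma.2 (mem_Ioi.2 hx) (mem_Ioi.2 (by positivity : 0 < x + n))
    (sub_nonneg.2 ht1) ht0 (by ring)
  have hpt : (1 - t) • x + t • (x + n) = x + γ := by rw [hγn, smul_eq_mul, smul_eq_mul]; ring
  rw [hpt] at hconv
  simp only [Function.comp_apply, smul_eq_mul] at hconv
  have hG := Gamma_pos_of_pos hx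
  have hlog : log (Gamma (x + n)) ≤ n * log (2 * x) + log (Gamma x) := by
    rw [← log_pow, ← log_mul (by positivity) hG.ne']
    exact log_le_log (Gamma_pos_of_pos (by positivity)) (Gamma_add_nat_le hγx)
  rw [← exp_log (Gamma_pos_of_pos (by positivity : 0 < x + γ)), rpow_def_of_pos (by positivity),
    ← exp_log hG, ← exp_add]
  gcongr
  calc log (Gamma (x + γ)) ≤ (1 - t) * log (Gamma x) + t * log (Gamma (x + n)) := hconv
    _ ≤ (1 - t) * log (Gamma x) + t * (n * log (2 * x) + log (Gamma x)) := by gcongr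
    _ = log (2 * x) * γ + log (Gamma x) := by rw [hγn]; ring

theorem isBigO_Gamma_add (γ : ℝ) :
    (fun x ↦ Gamma (x + γ)) =O[atTop] fun x ↦ x ^ γ * Gamma x := by
  set n := ⌈-γ⌉₊
  have hn : -γ ≤ n := Nat.le_ceil _
  refine IsBigO.of_bound (2 ^ γ * 2 ^ n * 2 ^ n) ?_
  filter_upwards [eventually_ge_atTop (2 * |γ| + 2 * n + 2)] with x hx
  have habs := abs_nonneg γ
  have hγabs := neg_abs_le γ
  have hx0 : 0 < x := by linarith
  have hxγ : x / 2 ≤ x + γ := by linarith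
  have hceil : (⌈γ + n⌉₊ : ℝ) ≤ x := by
    have := Nat.ceil_lt_add_one (by linarith : 0 ≤ γ + n)
    linarith [le_abs_self γ]
  have hGγ := Gamma_pos_of_pos (by linarith : 0 < x + γ)
  have key : (x / 2) ^ n * Gamma (x + γ) ≤ (2 * x) ^ (γ + n) * Gamma x :=
    calc (x / 2) ^ n * Gamma (x + γ) ≤ (x + γ) ^ n * Gamma (x + γ) := by gcongr
      _ ≤ Gamma (x + γ + n) := pow_mul_Gamma_le_Gamma_add_nat (by linarith) n
      _ = Gamma (x + (γ + n)) := by ring_nf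
      _ ≤ (2 * x) ^ (γ + n) * Gamma x := Gamma_add_le_of_nonneg hx0 (by linarith) hceil
  have hpow : (2 * x) ^ (γ + n) = (x / 2) ^ n * (2 ^ γ * 2 ^ n * 2 ^ n * x ^ γ) := by
    rw [rpow_add (by positivity), rpow_natCast, mul_rpow (by norm_num) hx0.le, div_pow, mul_pow]
    field_simp
  rw [hpow, mul_assoc] at key
  rw [norm_of_nonneg hGγ.le, norm_of_nonneg (by positivity), ← mul_assoc]
  exact le_of_mul_le_mul_left key (by positivity)

theorem Gamma_mul_sqrt_le_Gamma_add_half {x : ℝ} (hx : 3 / 2 ≤ x) :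
    Gamma x * √x ≤ 2 * Gamma (x + 1 / 2) := by
  set y := x - 1 / 2 with hy_def
  have hy : 1 ≤ y := by linarith
  have hceil : (⌈(1 / 2 : ℝ)⌉₊ : ℝ) ≤ y := by norm_num [Nat.ceil_eq_iff]; linarith
  have hshift : Gamma x ≤ √(2 * y) * Gamma y := by
    rw [sqrt_eq_rpow, show x = y + 1 / 2 by ring]
    exact Gamma_add_le_of_nonneg (by linarith) (by norm_num) hceil
  have hsucc : Gamma (x + 1 / 2) = y * Gamma y := by
    rw [show x + 1 / 2 = y + 1 by ring, Gamma_add_one (by positivity)]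
  have hsqrt : √x ≤ √(2 * y) := sqrt_le_sqrt (by linarith)
  have hsq : √(2 * y) * √(2 * y) = 2 * y := mul_self_sqrt (by linarith)
  have hG := Gamma_pos_of_pos (by linarith : 0 < y)
  calc Gamma x * √x ≤ √(2 * y) * Gamma y * √(2 * y) := by gcongr
    _ = 2 * Gamma (x + 1 / 2) := by rw [hsucc, mul_right_comm, hsq]; ring

/-- Legendre's duplication formula combined with `Γ(x) √x ≤ 2 Γ(x + 1/2)`. -/
theorem two_rpow_mul_Gamma_sq_mul_sqrt_le {x : ℝ} (hx : 3 / 2 ≤ x) :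
    (2 ^ x * Gamma x) ^ 2 * √x ≤ 8 * Gamma (2 * x) := by
  have hdup := Gamma_mul_Gamma_add_half x
  have hG := Gamma_pos_of_pos (by linarith : 0 < x)
  have h2 : (2 : ℝ) ^ x * 2 ^ x * 2 ^ (1 - 2 * x) = 2 := by
    rw [← rpow_add two_pos, ← rpow_add two_pos]; ring_nf; exact rpow_one 2
  have hπ : √π ≤ 2 := by
    rw [sqrt_le_left (by norm_num)]; linarith [pi_le_four]
  calc (2 ^ x * Gamma x) ^ 2 * √x = 2 ^ x * 2 ^ x * Gamma x * (Gamma x * √x) := by ring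
    _ ≤ 2 ^ x * 2 ^ x * Gamma x * (2 * Gamma (x + 1 / 2)) := by
        gcongr ?_ * ?_; exact Gamma_mul_sqrt_le_Gamma_add_half hx
    _ = 2 * (2 ^ x * 2 ^ x) * (Gamma x * Gamma (x + 1 / 2)) := by ring
    _ = 2 * (2 ^ x * 2 ^ x * 2 ^ (1 - 2 * x)) * √π * Gamma (2 * x) := by rw [hdup]; ring
    _ ≤ 8 * Gamma (2 * x) := by
        rw [h2]; nlinarith [Gamma_pos_of_pos (by linarith : 0 < 2 * x)]

theorem two_rpow_mul_Gamma_mul_Gamma_two_mul_rpow_le {x : ℝ} (hx : 3 / 2 ≤ x) :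
    2 ^ x * Gamma x * Gamma (2 * x) ^ (-(1 : ℝ) / 2) ≤ 3 * x ^ (-(1 : ℝ) / 4) := by
  have hx0 : 0 < x := by linarith
  have hG2 := Gamma_pos_of_pos (by linarith : 0 < 2 * x)
  let u := 2 ^ x * Gamma x * Gamma (2 * x) ^ (-(1 : ℝ) / 2) * x ^ ((1 : ℝ) / 4)
  have hu : u ^ 2 ≤ 3 ^ 2 := by
    have hG : (Gamma (2 * x) ^ (-(1 : ℝ) / 2)) ^ 2 = (Gamma (2 * x))⁻¹ := by
      rw [← rpow_natCast, ← rpow_mul hG2.le]; norm_num [rpow_neg_one]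
    have hx4 : (x ^ ((1 : ℝ) / 4)) ^ 2 = √x := by
      rw [← rpow_natCast, ← rpow_mul hx0.le, sqrt_eq_rpow]; norm_num
    have := two_rpow_mul_Gamma_sq_mul_sqrt_le hx
    calc u ^ 2 = (2 ^ x * Gamma x) ^ 2 * √x / Gamma (2 * x) := by
          rw [mul_pow, mul_pow, hG, hx4]; ring
      _ ≤ 3 ^ 2 := by rw [div_le_iff₀ hG2]; nlinarith
  have hu3 : u ≤ 3 := (pow_le_pow_iff_left₀ (by positivity) (by norm_num) two_ne_zero).1 hu
  calc 2 ^ x * Gamma x * Gamma (2 * x) ^ (-(1 : ℝ) / 2) = u * x ^ (-(1 : ℝ) / 4) := by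
        rw [mul_assoc (2 ^ x * Gamma x * _), ← rpow_add hx0]; norm_num
    _ ≤ 3 * x ^ (-(1 : ℝ) / 4) := by gcongr

theorem rpow_self_mul_exp_neg_sub_one_le {x y : ℝ} (hx : 0 < x) (hxy : x ≤ y)
    (hy : y ≤ x + √x) : x ^ x * exp (-x - 1) ≤ exp (-y) * y ^ x := by
  have hy0 : 0 < y := by linarith
  have hlog : log x - log y ≤ x / y - 1 := by
    rw [← log_div hx.ne' hy0.ne']; exact log_le_sub_one_of_pos (by positivity)
  have hd : (y - x) ^ 2 ≤ y := by
    nlinarith [sq_sqrt hx.le, sqrt_nonneg x]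
  have key : x * log x - x - 1 ≤ x * log y - y := by
    have h1 : x * (log x - log y) ≤ x * (x / y - 1) := by gcongr
    have h2 : x * (x / y - 1) = x - y + (y - x) ^ 2 / y := by field_simp; ring
    have h3 : (y - x) ^ 2 / y ≤ 1 := (div_le_one hy0).2 hd
    linarith
  rw [rpow_def_of_pos hx, rpow_def_of_pos hy0, ← exp_add, ← exp_add]
  exact exp_le_exp.2 (by linarith)

/-- A Stirling-type lower bound, from `Γ(x + 1) = ∫ e^{-y} y^x` restricted to `[x, x + √x]`. -/
theorem sqrt_mul_rpow_self_mul_exp_neg_le {x : ℝ} (hx : 0 < x) :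
    √x * x ^ x * exp (-x) ≤ exp 1 * Gamma (x + 1) := by
  have hint : IntegrableOn (fun y ↦ exp (-y) * y ^ x) (Ioi 0) := by
    simpa using GammaIntegral_convergent (by linarith : 0 < x + 1)
  have hsub : Ioc x (x + √x) ⊆ Ioi 0 := fun y hy ↦ hx.trans hy.1
  have hlocal : √x * (x ^ x * exp (-x - 1)) ≤ ∫ y in Ioc x (x + √x), exp (-y) * y ^ x :=
    mul_le_setIntegral_Ioc (sqrt_nonneg x) (hint.mono_set hsub)
      fun y hy ↦ rpow_self_mul_exp_neg_sub_one_le hx hy.1.le hy.2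
  have hglobal : ∫ y in Ioc x (x + √x), exp (-y) * y ^ x ≤ Gamma (x + 1) := by
    rw [Gamma_eq_integral (by linarith)]
    simp only [add_sub_cancel_right]
    refine setIntegral_mono_set hint ?_ hsub.eventuallyLE
    filter_upwards [self_mem_ae_restrict measurableSet_Ioi] with y hy
    exact mul_nonneg (exp_pos _).le (rpow_nonneg (le_of_lt hy) _)
  calc √x * x ^ x * exp (-x) = exp 1 * (√x * (x ^ x * exp (-x - 1))) := by
        rw [sub_eq_add_neg, exp_add, exp_neg 1]; field_simp
    _ ≤ exp 1 * Gamma (x + 1) := by gcongr; exact hlocal.trans hglobal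

end Real

noncomputable def powExpHalf (p x : ℝ) : ℝ := x ^ p * exp (-(x / 2))

theorem powExpHalf_nonneg (p : ℝ) {x : ℝ} (hx : 0 ≤ x) : 0 ≤ powExpHalf p x :=
  mul_nonneg (rpow_nonneg hx p) (exp_pos _).le

theorem powExpHalf_eq_exp (p : ℝ) {x : ℝ} (hx : 0 < x) :
    powExpHalf p x = exp (p * log x - x / 2) := by
  rw [powExpHalf, rpow_def_of_pos hx, ← exp_add, mul_comm, sub_eq_add_neg]

theorem powExpHalf_monotoneOn {p : ℝ} (hp : 0 ≤ p) :
    MonotoneOn (powExpHalf p) (Ioc 0 (2 * p)) := by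
  intro x hx y hy hxy
  rw [powExpHalf_eq_exp p hx.1, powExpHalf_eq_exp p hy.1]
  have hlog : 1 - x / y ≤ log y - log x := by
    rw [← log_div hy.1.ne' hx.1.ne', ← neg_le_neg_iff, ← log_inv, inv_div, neg_sub]
    exact log_le_sub_one_of_pos (div_pos hx.1 hy.1)
  have : (y - x) / 2 ≤ p * (1 - x / y) := by
    rw [one_sub_div hy.1.ne', mul_div_assoc', le_div_iff₀ hy.1]
    nlinarith [hy.2]
  exact exp_le_exp.2 (by nlinarith)

theorem powExpHalf_antitoneOn {p : ℝ} (hp : 0 < p) :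
    AntitoneOn (powExpHalf p) (Ici (2 * p)) := by
  intro x hx y hy hxy
  have hx0 : 0 < x := by linarith [mem_Ici.1 hx]
  rw [powExpHalf_eq_exp p hx0, powExpHalf_eq_exp p (hx0.trans_le hxy)]
  have hlog : log y - log x ≤ y / x - 1 := by
    rw [← log_div (by linarith) hx0.ne']; exact log_le_sub_one_of_pos (div_pos (by linarith) hx0)
  have : p * (y / x - 1) ≤ (y - x) / 2 := by
    rw [div_sub_one hx0.ne', mul_div_assoc', div_le_iff₀ hx0]
    nlinarith [mem_Ici.1 hx]
  exact exp_le_exp.2 (by nlinarith)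

theorem integral_powExpHalf {p : ℝ} (hp : -1 < p) :
    ∫ x in Ioi 0, powExpHalf p x = 2 ^ (p + 1) * Gamma (p + 1) := by
  have := integral_rpow_mul_exp_neg_mul_Ioi (by linarith : 0 < p + 1) (by norm_num : (0 : ℝ) < 1 / 2)
  rw [show (1 : ℝ) / (1 / 2) = 2 by norm_num] at this
  rw [← this]
  refine setIntegral_congr_fun measurableSet_Ioi fun x _ ↦ ?_
  simp only [powExpHalf, add_sub_cancel_right]
  ring_nf

theorem integrableOn_powExpHalf {p : ℝ} (hp : -1 < p) :
    IntegrableOn (powExpHalf p) (Ioi 0) := by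
  refine (integrableOn_rpow_mul_exp_neg_mul_rpow hp one_pos (by norm_num : (0 : ℝ) < 1 / 2)).congr_fun
    (fun x _ ↦ ?_) measurableSet_Ioi
  simp only [powExpHalf, rpow_one]
  ring_nf

theorem two_mul_powExpHalf_two_mul_le {p : ℝ} (hp : 0 < p) :
    2 * powExpHalf p (2 * p) ≤ exp 1 * (2 ^ (p + 1) * Gamma (p + 1)) / √p := by
  have hsqrt : 0 < √p := sqrt_pos.2 hp
  have h := sqrt_mul_rpow_self_mul_exp_neg_le hp
  rw [le_div_iff₀ hsqrt, powExpHalf, mul_rpow (by norm_num) hp.le, rpow_add_one (by norm_num)]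
  calc 2 * (2 ^ p * p ^ p * exp (-(2 * p / 2))) * √p = 2 * 2 ^ p * (√p * p ^ p * exp (-p)) := by
        ring_nf
    _ ≤ 2 * 2 ^ p * (exp 1 * Gamma (p + 1)) := by gcongr
    _ = _ := by ring

theorem natCast_le_abs_sub_of_modEq_s5 {N D D' : ℕ} {a : ℤ} (hD : (D : ℤ) ≡ a [ZMOD N])
    (hD' : (D' : ℤ) ≡ a [ZMOD N]) (hne : D ≠ D') : (N : ℝ) ≤ |(D : ℝ) - D'| := by
  have hdvd : (N : ℤ) ∣ |(D : ℤ) - D'| := (dvd_abs _ _).2 (hD'.trans hD.symm).dvd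
  have hpos : 0 < |(D : ℤ) - D'| := abs_pos.2 (sub_ne_zero.2 (by exact_mod_cast hne))
  exact_mod_cast Int.le_of_dvd hpos hdvd

theorem Q1_summand_eq {l α β v' : ℝ} (hv' : 0 < v') {D : ℕ} (hD : 0 < D) :
    (4 * π * v' * D) ^ (l / 2) * Gamma l ^ (-(1 : ℝ) / 2) * exp (-2 * π * v' * D) * l ^ α *
        (D : ℝ) ^ (-β) =
      Gamma l ^ (-(1 : ℝ) / 2) * l ^ α * (4 * π * v') ^ β * powExpHalf (l / 2 - β) (4 * π * v' * D) := by
  have hc : 0 < 4 * π * v' := by positivity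
  have hD' : (0 : ℝ) < D := by exact_mod_cast hD
  rw [powExpHalf, rpow_sub (by positivity), mul_rpow (z := β) hc.le hD'.le, rpow_neg hD'.le,
    show -(4 * π * v' * D / 2) = -2 * π * v' * D by ring]
  field_simp

theorem Q1_le {l α β : ℝ} (hl : 0 < l) (hp : 0 < l / 2 - β) {N : ℕ} (hN : 0 < N) (a : ℤ)
    {v' : ℝ} (hv' : 0 < v') :
    Q1 l α β N a v' ≤ Gamma l ^ (-(1 : ℝ) / 2) * l ^ α * (4 * π * v') ^ β *
      (2 * powExpHalf (l / 2 - β) (2 * (l / 2 - β)) +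
        2 ^ (l / 2 - β + 1) * Gamma (l / 2 - β + 1) / (4 * π * v' * N)) := by
  classical
  set p := l / 2 - β
  set c := 4 * π * v'
  have hc : 0 < c := by positivity
  have hK : 0 ≤ Gamma l ^ (-(1 : ℝ) / 2) * l ^ α * c ^ β := by
    have := Gamma_pos_of_pos hl
    positivity
  have hf2p := powExpHalf_nonneg p (by positivity : 0 ≤ 2 * p)
  have hGp := Gamma_pos_of_pos (by linarith : 0 < p + 1)
  refine tsum_le_of_sum_le' (by positivity) fun F ↦ ?_
  rw [← Finset.sum_filter, Finset.sum_congr rfl fun D hD ↦ Q1_summand_eq hv' (Finset.mem_filter.1 hD).2.1,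
    ← Finset.mul_sum, ← integral_powExpHalf (by linarith : -1 < p)]
  gcongr
  refine sum_le_two_mul_add_integral_div (by positivity) (by positivity) (powExpHalf_monotoneOn hp.le)
    (powExpHalf_antitoneOn hp) (integrableOn_powExpHalf (by linarith))
    (fun y hy ↦ powExpHalf_nonneg p (le_of_lt hy)) (fun D hD ↦ ?_) fun D hD D' hD' hne ↦ ?_
  · have : (0 : ℝ) < D := by exact_mod_cast (Finset.mem_filter.1 hD).2.1
    positivity
  · dsimp only
    rw [← mul_sub, abs_mul, abs_of_pos hc]
    gcongr
    exact natCast_le_abs_sub_of_modEq_s5 (Finset.mem_filter.1 hD).2.2 (Finset.mem_filter.1 hD').2.2 hne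

theorem isBigO_Gamma_half_sub_add_one (β : ℝ) :
    (fun l ↦ Gamma l ^ (-(1 : ℝ) / 2) * (2 ^ (l / 2 - β + 1) * Gamma (l / 2 - β + 1)))
      =O[atTop] fun l ↦ l ^ (3 / 4 - β) := by
  have hshift : (fun l ↦ Gamma (l / 2 + (1 - β))) =O[atTop] fun l ↦ (l / 2) ^ (1 - β) * Gamma (l / 2) :=
    (isBigO_Gamma_add (1 - β)).comp_tendsto (tendsto_id.atTop_div_const two_pos)
  have hmul := (isBigO_refl (fun l ↦ Gamma l ^ (-(1 : ℝ) / 2) * 2 ^ (l / 2 - β + 1)) atTop).mul hshift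
  refine (hmul.congr_left fun l ↦ by rw [show l / 2 + (1 - β) = l / 2 - β + 1 by ring]; ring).trans ?_
  refine IsBigO.of_bound (3 * 2 ^ (1 - β) / 2 ^ (3 / 4 - β)) ?_
  filter_upwards [eventually_ge_atTop 3] with l hl
  have hl2 : 0 < l / 2 := by linarith
  have hdup := two_rpow_mul_Gamma_mul_Gamma_two_mul_rpow_le (x := l / 2) (by linarith)
  rw [mul_div_cancel₀ l two_ne_zero] at hdup
  have hG := Gamma_pos_of_pos hl2
  rw [norm_of_nonneg (by positivity), norm_of_nonneg (by positivity)]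
  calc Gamma l ^ (-(1 : ℝ) / 2) * 2 ^ (l / 2 - β + 1) * ((l / 2) ^ (1 - β) * Gamma (l / 2))
      = 2 ^ (1 - β) * (l / 2) ^ (1 - β) * (2 ^ (l / 2) * Gamma (l / 2) * Gamma l ^ (-(1 : ℝ) / 2)) := by
        rw [show l / 2 - β + 1 = l / 2 + (1 - β) by ring, rpow_add two_pos]; ring
    _ ≤ 2 ^ (1 - β) * (l / 2) ^ (1 - β) * (3 * (l / 2) ^ (-(1 : ℝ) / 4)) := by gcongr
    _ = 3 * 2 ^ (1 - β) / 2 ^ (3 / 4 - β) * l ^ (3 / 4 - β) := by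
        rw [mul_left_comm, mul_assoc, ← rpow_add hl2, div_rpow (by linarith) zero_le_two]
        ring_nf

theorem one_div_sqrt_le_two_mul_rpow_neg_half {l p : ℝ} (hl : 0 < l) (hp : l / 4 ≤ p) :
    1 / √p ≤ 2 * l ^ (-(1 : ℝ) / 2) := by
  have hsl : √l ≤ 2 * √p := by
    rw [show (2 : ℝ) = √4 by rw [show (4 : ℝ) = 2 ^ 2 by norm_num, sqrt_sq zero_le_two],
      ← sqrt_mul zero_le_four]
    exact sqrt_le_sqrt (by linarith)
  rw [neg_div, rpow_neg hl.le, ← sqrt_eq_rpow, ← div_eq_mul_inv,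
    div_le_div_iff₀ (sqrt_pos.2 (by linarith)) (sqrt_pos.2 hl)]
  linarith

theorem four_pi_mul_rpow_eq (β : ℝ) {N : ℕ} (hN : 0 < N) {v' : ℝ} (hv' : 0 < v') :
    (4 * π * v') ^ β =
      (2 * π) ^ (β - 1) * (2 * N * v') ^ (β - 1) * (N : ℝ) ^ (-β) * (2 * π * (2 * N * v')) := by
  have hv : 0 < 2 * N * v' := by positivity
  rw [show 4 * π * v' = 2 * π * (2 * N * v') * (N : ℝ)⁻¹ by field_simp; ring,
    mul_rpow (by positivity) (by positivity), mul_rpow (by positivity) hv.le,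
    inv_rpow (by positivity), ← rpow_neg (by positivity), rpow_sub_one (by positivity),
    rpow_sub_one hv.ne']
  field_simp

theorem eventually_Q1_le (α β : ℝ) : ∃ C > 0, ∀ᶠ l in atTop, ∀ N : ℕ, 0 < N → ∀ (a : ℤ) (v' : ℝ),
    0 < v' → Q1 l α β N a v' ≤ C * l ^ (α - β + 3 / 4) * (2 * N * v') ^ (β - 1) * (N : ℝ) ^ (-β) *
      (1 + 2 * N * v' * l ^ (-(1 : ℝ) / 2)) := by
  obtain ⟨C₁, hC₁, hbound⟩ := (isBigO_Gamma_half_sub_add_one β).exists_pos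
  refine ⟨C₁ * (2 * π) ^ (β - 1) * (4 * π * exp 1), by positivity, ?_⟩
  filter_upwards [hbound.bound, eventually_ge_atTop (4 * |β| + 4)] with l hX hl N hN a v' hv'
  have hl0 : 0 < l := by linarith [abs_nonneg β]
  set p := l / 2 - β with hp_def
  have hp : l / 4 ≤ p := by linarith [le_abs_self β]
  set X := 2 ^ (p + 1) * Gamma (p + 1)
  set G := Gamma l ^ (-(1 : ℝ) / 2)
  set c := 4 * π * v'
  set v := 2 * N * v'
  have hG : 0 < G := rpow_pos_of_pos (Gamma_pos_of_pos hl0) _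
  have hX0 : 0 < X := by have := Gamma_pos_of_pos (by linarith : 0 < p + 1); positivity
  rw [norm_of_nonneg (by positivity), norm_of_nonneg (by positivity)] at hX
  have hv : 0 < v := by positivity
  have hcN : c * N = 2 * π * v := by simp only [c, v]; ring
  calc Q1 l α β N a v' ≤ G * l ^ α * c ^ β * (2 * powExpHalf p (2 * p) + X / (c * N)) :=
        Q1_le hl0 (by linarith) hN a hv'
    _ ≤ G * l ^ α * c ^ β * (exp 1 * X / √p + X / (c * N)) := by
        gcongr; exact two_mul_powExpHalf_two_mul_le (by linarith)
    _ = l ^ α * c ^ β * (G * X) * (exp 1 * (1 / √p) + 1 / (c * N)) := by ring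
    _ ≤ l ^ α * c ^ β * (C₁ * l ^ (3 / 4 - β)) * (exp 1 * (2 * l ^ (-(1 : ℝ) / 2)) + 1 / (c * N)) := by
        gcongr; exact one_div_sqrt_le_two_mul_rpow_neg_half hl0 hp
    _ = C₁ * (2 * π) ^ (β - 1) * l ^ (α - β + 3 / 4) * v ^ (β - 1) * (N : ℝ) ^ (-β) *
          (4 * π * exp 1 * (v * l ^ (-(1 : ℝ) / 2)) + 1) := by
        rw [four_pi_mul_rpow_eq β hN hv', hcN, show l ^ α = l ^ (α - β + 3 / 4) / l ^ (3 / 4 - β) by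
          rw [← rpow_sub hl0]; ring_nf]
        field_simp
        ring
    _ ≤ C₁ * (2 * π) ^ (β - 1) * l ^ (α - β + 3 / 4) * v ^ (β - 1) * (N : ℝ) ^ (-β) *
          (4 * π * exp 1 * (v * l ^ (-(1 : ℝ) / 2)) + 4 * π * exp 1) := by
        gcongr
        nlinarith [pi_gt_three, add_one_le_exp (1 : ℝ)]
    _ = _ := by ring

/-- Second case of Lemma 4.3 of the paper: if `v := 2 N v′ ≤ ℓ^{1/2+ε}` then
`Q₁ ≪ ℓ^{α−β+3/4+ε} v^{β−1} N^{−β} (1 + v ℓ^{−1/2})`. -/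
theorem stmt_5 (α β ε : ℝ) (hε : ε ∈ Set.Ioo (0 : ℝ) (1 / 2)) :
    ∃ C : ℝ, 0 < C ∧ ∃ ℓ₀ : ℝ, 2 ≤ ℓ₀ ∧
      ∀ (l : ℝ), ℓ₀ ≤ l → ∀ (N : ℕ), 0 < N → ∀ (a : ℤ) (v' : ℝ), 0 < v' →
        2 * N * v' ≤ l ^ (1 / 2 + ε) →
        Q1 l α β N a v' ≤
          C * l ^ (α - β + 3 / 4 + ε) * (2 * N * v') ^ (β - 1) * (N : ℝ) ^ (-β) *
            (1 + (2 * N * v') * l ^ (-(1 : ℝ) / 2)) := by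
  obtain ⟨C, hC, hQ⟩ := eventually_Q1_le α β
  obtain ⟨ℓ₀, hℓ₀⟩ := eventually_atTop.1 hQ
  refine ⟨C, hC, max ℓ₀ 2, le_max_right _ _, fun l hl N hN a v' hv' _ ↦ ?_⟩
  have hl1 : 1 ≤ l := by linarith [le_max_right ℓ₀ 2]
  refine (hℓ₀ l (le_of_max_le_left hl) N hN a v' hv').trans ?_
  have : l ^ (α - β + 3 / 4) ≤ l ^ (α - β + 3 / 4 + ε) :=
    rpow_le_rpow_of_exponent_le hl1 (by linarith [hε.1])
  gcongr
end

section
/- Let ε ∈ (0, 1/2). For every real ℓ ≥ 1 and every real x > 0 with |4πx − ℓ| ≥ ℓ^{1/2+ε}, one has (4πx/ℓ)^{ℓ/2} · exp(ℓ/2 − 2πx) ≤ exp(−ℓ^{2ε}/8). -/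
/-!
Put `t = 4πx/ℓ`. Then `h(x) = exp (ℓ/2 · (log t + 1 - t))`, and the first terms of the expansion
`log t = 2 artanh ((t - 1)/(t + 1))` give `log t + 1 - t ≤ -min ((t - 1)², 1)/4`. The hypothesis
says `|t - 1| ≥ ℓ^(ε - 1/2)`, and `ℓ^(ε - 1/2) ≤ 1`, so the exponent is at most
`-ℓ/8 · ℓ^(2ε - 1) = -ℓ^(2ε)/8`.
-/

open Real

namespace Real

lemma log_le_two_mul_sub_one_div_add_one {t : ℝ} (h0 : 0 < t) (h1 : t ≤ 1) :
    log t ≤ 2 * (t - 1) / (t + 1) := by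
  have h := le_log_one_add_of_nonneg (x := t⁻¹ - 1) (by linarith [one_le_inv₀ h0 |>.2 h1])
  rw [add_sub_cancel, log_inv] at h
  have e : 2 * (t⁻¹ - 1) / (t⁻¹ - 1 + 2) = -(2 * (t - 1) / (t + 1)) := by
    rw [show t⁻¹ - 1 + 2 = (t + 1) / t by field_simp; ring]
    field_simp
    ring
  linarith

lemma log_le_sq_sub_one_div_two_mul {t : ℝ} (h : 1 ≤ t) : log t ≤ (t ^ 2 - 1) / (2 * t) := by
  have ht1 : t + 1 ≠ 0 := by linarith
  have ht0 : t ≠ 0 := by linarith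
  have hx0 : 0 ≤ (t - 1) / (t + 1) := by apply div_nonneg <;> linarith
  have hx1 : (t - 1) / (t + 1) < 1 := by rw [div_lt_one (by linarith)]; linarith
  have key := log_div_le_sum_range_add hx0 hx1 0
  have e1 : (1 + (t - 1) / (t + 1)) / (1 - (t - 1) / (t + 1)) = t := by
    field_simp
    ring
  have e2 : ((t - 1) / (t + 1)) ^ (2 * 0 + 1) / (1 - ((t - 1) / (t + 1)) ^ 2) =
      (t ^ 2 - 1) / (4 * t) := by
    rw [show 1 - ((t - 1) / (t + 1)) ^ 2 = 4 * t / (t + 1) ^ 2 by field_simp; ring]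
    norm_num
    field_simp
    ring
  rw [e1, e2, Finset.sum_range_zero, zero_add] at key
  have e3 : (t ^ 2 - 1) / (2 * t) = 2 * ((t ^ 2 - 1) / (4 * t)) := by ring
  linarith

lemma log_add_one_sub_le_neg_min {t : ℝ} (ht : 0 < t) :
    log t + 1 - t ≤ -min ((t - 1) ^ 2) 1 / 4 := by
  rcases le_total t 1 with h1 | h1
  · have hlog := log_le_two_mul_sub_one_div_add_one ht h1
    have e : 2 * (t - 1) / (t + 1) + 1 - t = -((t - 1) ^ 2 / (t + 1)) := by
      field_simp
      ring
    have : (t - 1) ^ 2 / 4 ≤ (t - 1) ^ 2 / (t + 1) := by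
      gcongr
      linarith
    linarith [min_le_left ((t - 1) ^ 2) 1]
  · have hlog := log_le_sq_sub_one_div_two_mul h1
    have e : (t ^ 2 - 1) / (2 * t) + 1 - t = -((t - 1) ^ 2 / (2 * t)) := by
      field_simp
      ring
    have : min ((t - 1) ^ 2) 1 / 4 ≤ (t - 1) ^ 2 / (2 * t) := by
      rw [div_le_div_iff₀ (by norm_num) (by positivity)]
      rcases le_total t 2 with h2 | h2
      · nlinarith [min_le_left ((t - 1) ^ 2) 1, sq_nonneg (t - 1)]
      · nlinarith [min_le_right ((t - 1) ^ 2) 1]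
    linarith

lemma rpow_mul_exp_sub_mul_le {t a : ℝ} (ht : 0 < t) (ha : 0 ≤ a) :
    t ^ a * exp (a - a * t) ≤ exp (-(a * min ((t - 1) ^ 2) 1) / 4) := by
  calc t ^ a * exp (a - a * t) = exp (a * (log t + 1 - t)) := by
        rw [rpow_def_of_pos ht, ← exp_add]
        ring_nf
    _ ≤ exp (a * (-min ((t - 1) ^ 2) 1 / 4)) := by
        gcongr
        exact log_add_one_sub_le_neg_min ht
    _ = exp (-(a * min ((t - 1) ^ 2) 1) / 4) := by ring_nf

end Real

/-- Exponential decay of `h(x) = (4πx/ℓ)^{ℓ/2} exp(ℓ/2 − 2πx)` when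
`|4πx − ℓ| ≥ ℓ^{1/2+ε}`; used in the proof of Lemma 4.3 of the paper. -/
theorem stmt_7 (ε : ℝ) (hε : ε ∈ Set.Ioo (0 : ℝ) (1 / 2)) (l x : ℝ)
    (hl : 1 ≤ l) (hx : 0 < x) (h : l ^ (1 / 2 + ε) ≤ |4 * π * x - l|) :
    (4 * π * x / l) ^ (l / 2) * Real.exp (l / 2 - 2 * π * x) ≤
      Real.exp (-(l ^ (2 * ε)) / 8) := by
  obtain ⟨hε0, hε2⟩ := hε
  have hl0 : 0 < l := by linarith
  set t := 4 * π * x / l with ht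
  have hdev : l ^ (2 * ε - 1) ≤ (t - 1) ^ 2 := by
    have hgap : 4 * π * x - l = (t - 1) * l := by rw [ht]; field_simp
    have hsq : (l ^ (1 / 2 + ε)) ^ 2 = l ^ (2 * ε - 1) * l ^ 2 := by
      rw [← rpow_natCast, ← rpow_mul hl0.le, ← rpow_natCast, ← rpow_add hl0]
      ring_nf
    have := pow_le_pow_left₀ (by positivity) h 2
    rw [hsq, sq_abs, hgap, mul_pow] at this
    exact le_of_mul_le_mul_right this (by positivity)
  have hsmall : l ^ (2 * ε - 1) ≤ 1 := rpow_le_one_of_one_le_of_nonpos hl (by linarith)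
  have hpow : l ^ (2 * ε) = l * l ^ (2 * ε - 1) := by
    rw [← rpow_one_add' hl0.le (by linarith)]
    ring_nf
  calc t ^ (l / 2) * exp (l / 2 - 2 * π * x) = t ^ (l / 2) * exp (l / 2 - l / 2 * t) := by
        rw [ht]; field_simp; ring_nf
    _ ≤ exp (-(l / 2 * min ((t - 1) ^ 2) 1) / 4) :=
        rpow_mul_exp_sub_mul_le (by positivity) (by positivity)
    _ ≤ exp (-(l ^ (2 * ε)) / 8) := by
        have := mul_le_mul_of_nonneg_left (le_min hdev hsmall) hl0.le
        rw [exp_le_exp, hpow]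
        linarith
end

section
/- For all real numbers s > 0, v > 0 and every y ∈ ℝ, the sum Σ_{r ∈ ℤ} exp(−2π(r·y + r²·v/s)) converges and satisfies Σ_{r ∈ ℤ} exp(−2π(r·y + r²·v/s)) ≤ exp(2π s y²/v) · (1 + √(s/v)). -/
/-!
Completing the square, `2π(ry + r²v/s) ≥ πr²v/s - πsy²/v`, dominates each term by
`exp(πsy²/v)` times the Gaussian `exp(-πr²v/s)`. The Gaussian sum over `ℤ` is its `r = 0` term
plus twice its tail, and the integral test bounds the tail by `∫₀^∞ exp(-πx²v/s) dx = √(s/v)/2`.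
-/

open Real Set MeasureTheory

section IntegralTest

variable {f : ℝ → ℝ}

theorem Function.Even.summable_int_of_antitoneOn (heven : f.Even) (anti : AntitoneOn f (Ici 0))
    (integrable : IntegrableOn f (Ioi 0)) (nonneg : ∀ t ∈ Ioi 0, 0 ≤ f t) :
    Summable (fun n : ℤ => f n) := by
  have hnat := anti.summable_of_integrableOn_Ioi_zero integrable nonneg
  exact Summable.of_nat_of_neg hnat (by simpa only [Int.cast_neg, Int.cast_natCast, heven _])

theorem Function.Even.tsum_int_le_of_antitoneOn (heven : f.Even) (anti : AntitoneOn f (Ici 0))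
    (integrable : IntegrableOn f (Ioi 0)) (nonneg : ∀ t ∈ Ioi 0, 0 ≤ f t) :
    ∑' n : ℤ, f n ≤ f 0 + 2 * ∫ x in Ioi 0, f x := by
  have heven_int : (fun n : ℤ => f n).Even := fun n => by simpa only [Int.cast_neg] using heven n
  rw [tsum_int_eq_zero_add_two_mul_tsum_pnat heven_int
      (heven.summable_int_of_antitoneOn anti integrable nonneg),
    tsum_pnat_eq_tsum_succ (f := fun n : ℕ => f ((n : ℤ) : ℝ))]
  have htail := anti.tsum_add_one_le_integral integrable nonneg
  push_cast at htail ⊢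
  rw [two_smul]
  linarith

end IntegralTest

theorem summable_int_exp_neg_mul_sq {c : ℝ} (hc : 0 < c) :
    Summable (fun r : ℤ => exp (-c * (r : ℝ) ^ 2)) ∧
      ∑' r : ℤ, exp (-c * (r : ℝ) ^ 2) ≤ 1 + √(π / c) := by
  have heven : (fun x : ℝ => exp (-c * x ^ 2)).Even := fun x => by simp only [neg_sq]
  have anti : AntitoneOn (fun x : ℝ => exp (-c * x ^ 2)) (Ici 0) := fun x _ y _ hxy => by
    simp only [exp_le_exp, neg_mul, neg_le_neg_iff]
    gcongr
  have integrable := (integrable_exp_neg_mul_sq hc).integrableOn (s := Ioi 0)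
  have nonneg : ∀ t ∈ Ioi (0 : ℝ), 0 ≤ exp (-c * t ^ 2) := fun t _ => (exp_pos _).le
  refine ⟨heven.summable_int_of_antitoneOn anti integrable nonneg, ?_⟩
  have hle := heven.tsum_int_le_of_antitoneOn anti integrable nonneg
  rw [integral_gaussian_Ioi] at hle
  simpa [mul_div_cancel₀] using hle

theorem exp_neg_mul_add_mul_sq_le {a : ℝ} (ha : 0 < a) (b x : ℝ) :
    exp (-(b * x + a * x ^ 2)) ≤ exp (b ^ 2 / (2 * a)) * exp (-(a / 2) * x ^ 2) := by
  rw [← exp_add, exp_le_exp]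
  have hsq : 0 ≤ (a * x + b) ^ 2 / (2 * a) := by positivity
  have : (a * x + b) ^ 2 / (2 * a) = a / 2 * x ^ 2 + b * x + b ^ 2 / (2 * a) := by
    field_simp; ring
  linarith

/-- The Gaussian lattice-sum estimate (4.19) of the paper:
`Σ_{r ∈ ℤ} exp(−2π(ry + r²v/s)) ≤ exp(2πsy²/v)(1 + √(s/v))`. -/
theorem stmt_8 (s v y : ℝ) (hs : 0 < s) (hv : 0 < v) :
    Summable (fun r : ℤ => Real.exp (-2 * π * ((r : ℝ) * y + (r : ℝ) ^ 2 * v / s))) ∧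
      ∑' r : ℤ, Real.exp (-2 * π * ((r : ℝ) * y + (r : ℝ) ^ 2 * v / s)) ≤
        Real.exp (2 * π * s * y ^ 2 / v) * (1 + Real.sqrt (s / v)) := by
  have hc : 0 < π * v / s := by positivity
  obtain ⟨hgauss, hgauss_le⟩ := summable_int_exp_neg_mul_sq hc
  have hterm (r : ℤ) : exp (-2 * π * ((r : ℝ) * y + (r : ℝ) ^ 2 * v / s)) ≤
      exp (π * s * y ^ 2 / v) * exp (-(π * v / s) * (r : ℝ) ^ 2) := by
    have h := exp_neg_mul_add_mul_sq_le (a := 2 * π * v / s) (by positivity) (2 * π * y) r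
    convert h using 3
    · ring
    · field_simp
    · ring
  have hsum := Summable.of_nonneg_of_le (fun r => (exp_pos _).le) hterm (hgauss.mul_left _)
  refine ⟨hsum, ?_⟩
  have hsqrt : √(π / (π * v / s)) = √(s / v) := by congr 1; field_simp
  calc ∑' r : ℤ, exp (-2 * π * ((r : ℝ) * y + (r : ℝ) ^ 2 * v / s))
      ≤ ∑' r : ℤ, exp (π * s * y ^ 2 / v) * exp (-(π * v / s) * (r : ℝ) ^ 2) :=
        hsum.tsum_le_tsum hterm (hgauss.mul_left _)
    _ = exp (π * s * y ^ 2 / v) * ∑' r : ℤ, exp (-(π * v / s) * (r : ℝ) ^ 2) := tsum_mul_left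
    _ ≤ exp (2 * π * s * y ^ 2 / v) * (1 + √(s / v)) := by
      rw [← hsqrt]
      gcongr
      linarith [pi_pos]
end

section
/- For all real numbers a > 0, b > 0, m > 0 and every u ∈ ℝ, the double sum Σ_{(p,q) ∈ ℤ×ℤ} exp(−m(a·p² + b·(u·p + q)²)) converges and satisfies Σ_{(p,q) ∈ ℤ×ℤ} exp(−m(a·p² + b·(u·p + q)²)) ≤ (1 + √(π/(a·m))) · (1 + √(π/(b·m))). -/
/-!
Let `f` be integrable, nonnegative and radially antitone, e.g. a Gaussian. After an integer shift
the lattice points are `y + ℤ` with `|y| ≤ 1/2`. Then `f (y + n + 1)` is at most the mean of `f`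
over `[y + n, y + n + 1]`, so the points to the right of `y` contribute at most `∫_{y}^{∞} f`,
symmetrically those to the left at most `∫_{-∞}^{y} f`, and `y` itself at most `f 0`. Hence
`∑_{q ∈ ℤ} f (x + q) ≤ f 0 + ∫ f`, which for `exp (-c t²)` is `1 + √(π/c)`. The two-dimensional
sum factors as a Gaussian in `p` times a shifted Gaussian in `q`, and summing first over `q`
gives the product bound.
-/

open Real MeasureTheory Set

def RadiallyAntitone (f : ℝ → ℝ) : Prop := ∀ ⦃x y : ℝ⦄, |x| ≤ |y| → f y ≤ f x

namespace RadiallyAntitone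

variable {f : ℝ → ℝ}

lemma le_intervalIntegral_of_abs_le (hf : RadiallyAntitone f) (hint : Integrable f)
    {s t : ℝ} (h : ∀ x ∈ Icc s (s + 1), |x| ≤ |t|) : f t ≤ ∫ x in s..s + 1, f x := by
  simpa using intervalIntegral.integral_mono_on (by linarith : s ≤ s + 1)
    intervalIntegrable_const hint.intervalIntegrable fun x hx => hf (h x hx)

lemma sum_range_le_integral_Ioi (hf : RadiallyAntitone f) (hf0 : 0 ≤ f)
    (hint : Integrable f) {y : ℝ} (hy : -(1 / 2) ≤ y) (N : ℕ) :
    ∑ n ∈ Finset.range N, f (y + n + 1) ≤ ∫ x in Ioi y, f x := calc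
  ∑ n ∈ Finset.range N, f (y + n + 1) ≤ ∑ n ∈ Finset.range N, ∫ x in y + n..y + n + 1, f x := by
    refine Finset.sum_le_sum fun n _ => hf.le_intervalIntegral_of_abs_le hint fun x hx => ?_
    have hn : (0 : ℝ) ≤ n := n.cast_nonneg
    rw [abs_of_nonneg (show 0 ≤ y + n + 1 by linarith)]
    exact abs_le.mpr ⟨by linarith [hx.1], hx.2⟩
  _ = ∫ x in y..y + N, f x := by
    simpa [add_assoc] using intervalIntegral.sum_integral_adjacent_intervals
      (a := fun n : ℕ => y + n) fun _ _ => hint.intervalIntegrable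
  _ ≤ ∫ x in Ioi y, f x := by
    rw [intervalIntegral.integral_of_le (by linarith [N.cast_nonneg (α := ℝ)])]
    exact setIntegral_mono_set hint.integrableOn (.of_forall hf0)
      Ioc_subset_Ioi_self.eventuallyLE

lemma summable_nat_add_one (hf : RadiallyAntitone f) (hf0 : 0 ≤ f)
    (hint : Integrable f) {y : ℝ} (hy : -(1 / 2) ≤ y) :
    Summable fun n : ℕ => f (y + n + 1) :=
  summable_of_sum_range_le (fun _ => hf0 _) (hf.sum_range_le_integral_Ioi hf0 hint hy)

lemma tsum_nat_add_one_le_integral_Ioi (hf : RadiallyAntitone f) (hf0 : 0 ≤ f)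
    (hint : Integrable f) {y : ℝ} (hy : -(1 / 2) ≤ y) :
    ∑' n : ℕ, f (y + n + 1) ≤ ∫ x in Ioi y, f x :=
  Real.tsum_le_of_sum_range_le (fun _ => hf0 _) (hf.sum_range_le_integral_Ioi hf0 hint hy)

lemma summable_and_tsum_int_le_of_abs_le_half (hf : RadiallyAntitone f)
    (hf0 : 0 ≤ f) (hint : Integrable f) {y : ℝ} (hy : |y| ≤ 1 / 2) :
    Summable (fun q : ℤ => f (y + q)) ∧ ∑' q : ℤ, f (y + q) ≤ f 0 + ∫ x, f x := by
  obtain ⟨hy₁, hy₂⟩ := abs_le.mp hy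
  have heven : ∀ x, f (-x) = f x := fun x =>
    le_antisymm (hf (abs_neg x).ge) (hf (abs_neg x).le)
  have hright : Summable fun n : ℕ => f (y + n) := by
    refine (summable_nat_add_iff 1).mp ?_
    simpa [add_assoc] using hf.summable_nat_add_one hf0 hint hy₁
  have hleft_eq : (fun n : ℕ => f (y + ↑(-(n + 1 : ℤ)))) = fun n : ℕ => f (-y + n + 1) := by
    ext n
    rw [← heven]
    push_cast
    ring_nf
  have hleft : Summable fun n : ℕ => f (y + ↑(-(n + 1 : ℤ))) := by
    rw [hleft_eq]
    exact hf.summable_nat_add_one hf0 hint (by linarith)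
  have hright_le : ∑' n : ℕ, f (y + n) ≤ f 0 + ∫ x in Ioi y, f x := by
    rw [hright.tsum_eq_zero_add]
    simp only [Nat.cast_zero, add_zero, Nat.cast_add, Nat.cast_one, ← add_assoc]
    exact add_le_add (hf (by simp)) (hf.tsum_nat_add_one_le_integral_Ioi hf0 hint hy₁)
  have hleft_le : ∑' n : ℕ, f (y + ↑(-(n + 1 : ℤ))) ≤ ∫ x in Iio y, f x := by
    rw [hleft_eq, ← integral_Iic_eq_integral_Iio]
    calc _ ≤ ∫ x in Ioi (-y), f x := hf.tsum_nat_add_one_le_integral_Ioi hf0 hint (by linarith)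
      _ = ∫ x in Iic y, f x := by simp only [← integral_comp_neg_Iic, heven]
  refine ⟨.of_nat_of_neg_add_one (f := fun q : ℤ => f (y + q)) hright hleft, ?_⟩
  rw [tsum_of_nat_of_neg_add_one (f := fun q : ℤ => f (y + q)) hright hleft,
    ← intervalIntegral.integral_Iic_add_Ioi (b := y) hint.integrableOn hint.integrableOn,
    integral_Iic_eq_integral_Iio]
  simp only [Int.cast_natCast]
  linarith

lemma summable_and_tsum_int_le (hf : RadiallyAntitone f) (hf0 : 0 ≤ f)
    (hint : Integrable f) (x : ℝ) :
    Summable (fun q : ℤ => f (x + q)) ∧ ∑' q : ℤ, f (x + q) ≤ f 0 + ∫ x, f x := by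
  have hshift : (fun q : ℤ => f (x - round x + q)) =
      (fun q : ℤ => f (x + q)) ∘ Equiv.subRight (round x) := by
    ext q
    simp only [Function.comp_apply, Equiv.subRight_apply, Int.cast_sub]
    ring_nf
  obtain ⟨hs, hle⟩ := hf.summable_and_tsum_int_le_of_abs_le_half hf0 hint (abs_sub_round x)
  rw [hshift] at hs hle
  exact ⟨(Equiv.summable_iff _).mp hs, (Equiv.tsum_eq _ _).symm.trans_le hle⟩

end RadiallyAntitone

lemma summable_and_tsum_prod_mul_le {ι κ : Type*} {A : ι → ℝ} {B : ι → κ → ℝ} {β : ℝ}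
    (hA0 : ∀ i, 0 ≤ A i) (hB0 : ∀ i j, 0 ≤ B i j) (hA : Summable A) (hB : ∀ i, Summable (B i))
    (hBβ : ∀ i, ∑' j, B i j ≤ β) :
    Summable (fun x : ι × κ => A x.1 * B x.1 x.2) ∧
      ∑' x : ι × κ, A x.1 * B x.1 x.2 ≤ (∑' i, A i) * β := by
  have hrow (i : ι) : Summable fun j => A i * B i j := (hB i).mul_left (A i)
  have hrow_le (i : ι) : ∑' j, A i * B i j ≤ A i * β := by
    rw [tsum_mul_left]
    exact mul_le_mul_of_nonneg_left (hBβ i) (hA0 i)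
  have hcol : Summable fun i => ∑' j, A i * B i j :=
    (hA.mul_right β).of_nonneg_of_le (fun i => tsum_nonneg fun j => mul_nonneg (hA0 i) (hB0 i j))
      hrow_le
  have hsum : Summable (fun x : ι × κ => A x.1 * B x.1 x.2) :=
    (summable_prod_of_nonneg fun x => mul_nonneg (hA0 _) (hB0 _ _)).mpr ⟨hrow, hcol⟩
  refine ⟨hsum, ?_⟩
  rw [hsum.tsum_prod' hrow, ← tsum_mul_right]
  exact hcol.tsum_le_tsum hrow_le (hA.mul_right β)

lemma summable_and_tsum_gaussian_int_le {c : ℝ} (hc : 0 < c) (x : ℝ) :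
    Summable (fun q : ℤ => exp (-c * (x + q) ^ 2)) ∧
      ∑' q : ℤ, exp (-c * (x + q) ^ 2) ≤ 1 + √(π / c) := by
  have hradial : RadiallyAntitone fun t => exp (-c * t ^ 2) := fun s t h =>
    exp_le_exp.mpr (by nlinarith [sq_le_sq.mpr h])
  have h := hradial.summable_and_tsum_int_le (fun _ => (exp_pos _).le)
    (integrable_exp_neg_mul_sq hc) x
  simpa only [integral_gaussian, ne_eq, two_ne_zero, not_false_eq_true, zero_pow, mul_zero,
    exp_zero] using h

/-- The two-dimensional Gaussian lattice-sum estimate of Section 4.2 of the paper: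
`Σ_{(p,q) ∈ ℤ²} exp(−m(ap² + b(up+q)²)) ≤ (1 + √(π/(am)))(1 + √(π/(bm)))`. -/
theorem stmt_9 (a b m u : ℝ) (ha : 0 < a) (hb : 0 < b) (hm : 0 < m) :
    Summable (fun pq : ℤ × ℤ =>
      Real.exp (-m * (a * (pq.1 : ℝ) ^ 2 + b * (u * (pq.1 : ℝ) + (pq.2 : ℝ)) ^ 2))) ∧
      ∑' pq : ℤ × ℤ,
          Real.exp (-m * (a * (pq.1 : ℝ) ^ 2 + b * (u * (pq.1 : ℝ) + (pq.2 : ℝ)) ^ 2)) ≤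
        (1 + Real.sqrt (π / (a * m))) * (1 + Real.sqrt (π / (b * m))) := by
  have hfactor (p q : ℤ) : exp (-m * (a * (p : ℝ) ^ 2 + b * (u * p + q) ^ 2)) =
      exp (-(a * m) * (0 + p) ^ 2) * exp (-(b * m) * (u * p + q) ^ 2) := by
    rw [← exp_add]
    ring_nf
  obtain ⟨hA, hA_le⟩ := summable_and_tsum_gaussian_int_le (mul_pos ha hm) 0
  have hB (p : ℤ) := summable_and_tsum_gaussian_int_le (mul_pos hb hm) (u * p)
  obtain ⟨hsum, hle⟩ := summable_and_tsum_prod_mul_le (fun _ => (exp_pos _).le)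
    (fun _ _ => (exp_pos _).le) hA (fun p => (hB p).1) (fun p => (hB p).2)
  simp only [hfactor]
  exact ⟨hsum, hle.trans (mul_le_mul_of_nonneg_right hA_le (by positivity))⟩
end

section
/- For every ε ∈ (0, 1/2) there exist constants c > 0, C > 0 and ℓ₀ ≥ 2, depending only on ε, such that for all real ℓ ≥ ℓ₀ and all real v′ > 0: Σ over positive integers D with |4π v′ D − ℓ| ≥ ℓ^{1/2+ε} of (4π v′ D)^{ℓ/2} Γ(ℓ)^{−1/2} exp(−2π v′ D) is at most C · (1 + 1/v′) · exp(−c·ℓ^{ε}). -/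
/-!
Stirling's bound gives `Γ(ℓ) ≥ (ℓ/e)^ℓ / ℓ²`, so with `x = 4π v′ D` the summand is at most
`ℓ · exp((ℓ/2)(log u + 1 - u))`, where `u = x/ℓ`. Since `log u + 1 - u ≤ -(u - 1)²/4` for `u ≤ 2`
and `≤ -u/8` for `u ≥ 2`, the condition `|x - ℓ| ≥ ℓ^{1/2+ε}` makes this at most
`ℓ · exp(-ℓ^{2ε}/16) · exp(-x/(64ℓ))`. Summing the geometric series in `D` costs a factor
`1 + 16ℓ/(π v′) ≤ 6ℓ(1 + 1/v′)`, and `ℓ² exp(-ℓ^{2ε}/32) ≤ 1` for large `ℓ`.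
-/

open Real Filter Topology

lemma hasDerivAt_log_add_one_sub_add_sq {u : ℝ} (hu : 0 < u) :
    HasDerivAt (fun u ↦ log u + 1 - u + (u - 1) ^ 2 / 4) ((u - 1) * (u - 2) / (2 * u)) u := by
  refine ((((hasDerivAt_log hu.ne').add_const 1).sub (hasDerivAt_id u)).add
    ((((hasDerivAt_id u).sub_const 1).pow 2).div_const 4)).congr_deriv ?_
  simp only [id]
  field_simp
  ring

lemma log_add_one_sub_le_neg_sq_div_four {u : ℝ} (hu0 : 0 < u) (hu2 : u ≤ 2) :
    log u + 1 - u ≤ -((u - 1) ^ 2 / 4) := by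
  set h : ℝ → ℝ := fun u ↦ log u + 1 - u + (u - 1) ^ 2 / 4
  have hderiv : ∀ {a b : ℝ}, 0 < a → ∀ v ∈ Set.Icc a b,
      HasDerivAt h ((v - 1) * (v - 2) / (2 * v)) v :=
    fun ha v hv ↦ hasDerivAt_log_add_one_sub_add_sq (ha.trans_le hv.1)
  have hcont : ∀ {a b : ℝ}, 0 < a → ContinuousOn h (Set.Icc a b) :=
    fun ha v hv ↦ (hderiv ha v hv).continuousAt.continuousWithinAt
  suffices h u ≤ h 1 by simp only [h] at this; norm_num at this; linarith
  rcases le_total u 1 with hu1 | hu1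
  · refine monotoneOn_of_hasDerivWithinAt_nonneg (convex_Icc u 1) (hcont hu0)
      (fun v hv ↦ (hderiv hu0 v (interior_subset hv)).hasDerivWithinAt) (fun v hv ↦ ?_)
      ⟨le_rfl, hu1⟩ ⟨hu1, le_rfl⟩ hu1
    rw [interior_Icc] at hv
    have : 0 < v := hu0.trans hv.1
    have : 0 ≤ (v - 1) * (v - 2) := by nlinarith [hv.2]
    positivity
  · refine antitoneOn_of_hasDerivWithinAt_nonpos (convex_Icc 1 u) (hcont one_pos)
      (fun v hv ↦ (hderiv one_pos v (interior_subset hv)).hasDerivWithinAt) (fun v hv ↦ ?_)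
      ⟨le_rfl, hu1⟩ ⟨hu1, le_rfl⟩ hu1
    rw [interior_Icc] at hv
    have : 0 < 2 * v := by linarith [hv.1]
    exact div_nonpos_of_nonpos_of_nonneg (by nlinarith [hv.1, hv.2]) this.le

lemma log_add_one_sub_le_neg_div_eight {u : ℝ} (hu : 2 ≤ u) : log u + 1 - u ≤ -(u / 8) := by
  have h := log_le_sub_one_of_pos (show 0 < u / 2 by linarith)
  rw [log_div (by linarith) two_ne_zero] at h
  linarith [log_two_lt_d9]

lemma half_mul_log_div_add_half_sub_le {l x A : ℝ} (hl : 1 ≤ l) (hx : 0 < x) (hA1 : 1 ≤ A)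
    (hAl : A ≤ l) (hsq : l * A ≤ (x - l) ^ 2) :
    l / 2 * log (x / l) + (l - x) / 2 ≤ -(A / 16) - x / (64 * l) := by
  have hl0 : 0 < l := by linarith
  have hsplit : l / 2 * log (x / l) + (l - x) / 2 = l / 2 * (log (x / l) + 1 - x / l) := by
    field_simp
    ring
  rw [hsplit]
  rcases le_total (x / l) 2 with hu | hu
  · have h := mul_le_mul_of_nonneg_left
      (log_add_one_sub_le_neg_sq_div_four (div_pos hx hl0) hu) (by positivity : 0 ≤ l / 2)
    have hq : l / 2 * -((x / l - 1) ^ 2 / 4) = -((x - l) ^ 2 / (8 * l)) := by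
      field_simp
      ring
    have hA : A / 8 ≤ (x - l) ^ 2 / (8 * l) := by
      rw [div_le_div_iff₀ (by norm_num) (by positivity)]
      linarith
    have hx : x / (64 * l) ≤ A / 16 := by
      rw [div_le_div_iff₀ (by positivity) (by norm_num)]
      rw [div_le_iff₀ hl0] at hu
      nlinarith
    linarith
  · have h := mul_le_mul_of_nonneg_left
      (log_add_one_sub_le_neg_div_eight hu) (by positivity : 0 ≤ l / 2)
    have hq : l / 2 * -(x / l / 8) = -(x / 16) := by
      field_simp
      ring
    rw [le_div_iff₀ hl0] at hu
    have hx : x / (64 * l) ≤ x / 32 := by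
      rw [div_le_div_iff₀ (by positivity) (by norm_num)]
      nlinarith
    linarith

lemma mul_log_sub_self_le_log_factorial (n : ℕ) : n * log n - n ≤ log n.factorial := by
  rcases eq_or_ne n 0 with rfl | hn
  · simp
  have h := Stirling.le_log_factorial_stirling hn
  have : 0 ≤ log n := log_natCast_nonneg n
  have : 0 ≤ log (2 * π) := log_nonneg (by linarith [pi_gt_three])
  linarith

lemma mul_log_sub_le_of_le_add_two {l m : ℝ} (hm : 1 ≤ m) (hml : m ≤ l) (hlm : l ≤ m + 2) :
    l * log l - l - 2 * log l ≤ m * log m - m := by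
  have hm0 : 0 < m := by linarith
  have hl0 : 0 < l := by linarith
  have hratio : m * (log l - log m) ≤ l - m := calc
    m * (log l - log m) ≤ m * (l / m - 1) := by
      rw [← log_div hl0.ne' hm0.ne']
      exact mul_le_mul_of_nonneg_left (log_le_sub_one_of_pos (div_pos hl0 hm0)) hm0.le
    _ = l - m := by field_simp
  have hlog : (l - m) * log l ≤ 2 * log l :=
    mul_le_mul_of_nonneg_right (by linarith) (log_nonneg (by linarith))
  nlinarith

lemma mul_log_sub_le_log_Gamma {l : ℝ} (hl : 2 ≤ l) :
    l * log l - l - 2 * log l ≤ log (Gamma l) := by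
  set m := ⌊l - 1⌋₊
  have hm1 : (1 : ℝ) ≤ m := by exact_mod_cast Nat.le_floor (by push_cast; linarith)
  have hml : (m : ℝ) ≤ l - 1 := Nat.floor_le (by linarith)
  have hlm : l - 1 < m + 1 := Nat.lt_floor_add_one _
  have hGamma : (m.factorial : ℝ) ≤ Gamma l := by
    rw [← Gamma_nat_eq_factorial]
    exact Gamma_strictMonoOn_Ici.monotoneOn (by simp only [Set.mem_Ici]; linarith)
      (by simpa using hl) (by linarith)
  calc l * log l - l - 2 * log l ≤ m * log m - m :=
        mul_log_sub_le_of_le_add_two (by linarith) (by linarith) (by linarith)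
    _ ≤ log m.factorial := mul_log_sub_self_le_log_factorial m
    _ ≤ log (Gamma l) := log_le_log (by positivity) hGamma

lemma inv_one_sub_exp_neg_le {a : ℝ} (ha : 0 < a) : (1 - exp (-a))⁻¹ ≤ 1 + 1 / a := by
  have hexp : exp (-a) ≤ 1 / (1 + a) := by
    rw [exp_neg, one_div]
    exact inv_anti₀ (by positivity) (by linarith [add_one_le_exp a])
  have hpos : 0 < 1 - exp (-a) := by linarith [exp_lt_one_iff.mpr (neg_lt_zero.mpr ha)]
  rw [inv_le_iff_one_le_mul₀ hpos]
  calc (1 : ℝ) = (1 + 1 / a) * (1 - 1 / (1 + a)) := by field_simp; ring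
    _ ≤ (1 + 1 / a) * (1 - exp (-a)) := by gcongr

lemma tsum_le_mul_one_add_inv_of_le_mul_exp {f : ℕ → ℝ} {B a : ℝ} (ha : 0 < a)
    (hf0 : ∀ n, 0 ≤ f n) (hf : ∀ n, f n ≤ B * exp (-(a * n))) :
    ∑' n, f n ≤ B * (1 + 1 / a) := by
  have hB : 0 ≤ B := by simpa using (hf0 0).trans (hf 0)
  have hr0 : 0 ≤ exp (-a) := (exp_pos _).le
  have hr1 : exp (-a) < 1 := exp_lt_one_iff.mpr (neg_lt_zero.mpr ha)
  have hgeom : ∀ n : ℕ, exp (-(a * n)) = exp (-a) ^ n := fun n ↦ by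
    rw [← exp_nat_mul]; ring_nf
  simp only [hgeom] at hf
  have hsum := (summable_geometric_of_lt_one hr0 hr1).mul_left B
  calc ∑' n, f n ≤ ∑' n, B * exp (-a) ^ n :=
        Summable.tsum_le_tsum hf (Summable.of_nonneg_of_le hf0 hf hsum) hsum
    _ = B * (1 - exp (-a))⁻¹ := by rw [tsum_mul_left, tsum_geometric_of_lt_one hr0 hr1]
    _ ≤ B * (1 + 1 / a) := mul_le_mul_of_nonneg_left (inv_one_sub_exp_neg_le ha) hB

lemma tendsto_rpow_mul_exp_neg_mul_rpow_atTop_nhds_zero (s b : ℝ) {p : ℝ} (hb : 0 < b)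
    (hp : 0 < p) : Tendsto (fun x : ℝ ↦ x ^ s * exp (-b * x ^ p)) atTop (𝓝 0) := by
  refine ((tendsto_rpow_mul_exp_neg_mul_atTop_nhds_zero (s / p) b hb).comp
    (tendsto_rpow_atTop hp)).congr' ?_
  filter_upwards [eventually_ge_atTop 0] with x hx
  simp only [Function.comp_apply]
  rw [← rpow_mul hx, mul_div_cancel₀ _ hp.ne']

lemma rpow_mul_Gamma_rpow_mul_exp_le {l x A : ℝ} (hl : 2 ≤ l) (hx : 0 < x) (hA1 : 1 ≤ A)
    (hAl : A ≤ l) (hsq : l * A ≤ (x - l) ^ 2) :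
    x ^ (l / 2) * Gamma l ^ (-(1 : ℝ) / 2) * exp (-(x / 2)) ≤
      l * exp (-(A / 16)) * exp (-(x / (64 * l))) := by
  have hl0 : 0 < l := by linarith
  rw [rpow_def_of_pos hx, rpow_def_of_pos (Gamma_pos_of_pos hl0), ← exp_log hl0, ← exp_add,
    ← exp_add, ← exp_add, ← exp_add, exp_log hl0, exp_le_exp]
  have hGamma := mul_log_sub_le_log_Gamma hl
  have hexp := half_mul_log_div_add_half_sub_le (by linarith) hx hA1 hAl hsq
  rw [log_div hx.ne' hl0.ne'] at hexp
  linarith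

noncomputable def tailTerm (ε l v' : ℝ) (D : ℕ) : ℝ :=
  if 0 < D ∧ l ^ (1 / 2 + ε) ≤ |4 * π * v' * D - l| then
    (4 * π * v' * D) ^ (l / 2) * (Gamma l) ^ (-(1 : ℝ) / 2) * exp (-2 * π * v' * D)
  else 0

lemma tailTerm_nonneg (ε l v' : ℝ) (hl : 0 < l) (hv' : 0 < v') (D : ℕ) :
    0 ≤ tailTerm ε l v' D := by
  unfold tailTerm
  have := Gamma_pos_of_pos hl
  split_ifs <;> positivity

lemma tailTerm_le {ε l v' : ℝ} (hε0 : 0 ≤ ε) (hε1 : ε ≤ 1 / 2) (hl : 2 ≤ l) (hv' : 0 < v')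
    (D : ℕ) :
    tailTerm ε l v' D ≤ l * exp (-(l ^ (2 * ε) / 16)) * exp (-(π * v' / (16 * l) * D)) := by
  have hl0 : 0 < l := by linarith
  unfold tailTerm
  split_ifs with hD
  · obtain ⟨hD0, hdev⟩ := hD
    set x := 4 * π * v' * D with hx_def
    have hx : 0 < x := by positivity
    have hsq : l * l ^ (2 * ε) ≤ (x - l) ^ 2 := calc
      l * l ^ (2 * ε) = (l ^ (1 / 2 + ε)) ^ 2 := by
        rw [← rpow_one_add' hl0.le (by positivity), ← rpow_natCast, ← rpow_mul hl0.le]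
        congr 1
        push_cast
        ring
      _ ≤ |x - l| ^ 2 := pow_le_pow_left₀ (by positivity) hdev 2
      _ = (x - l) ^ 2 := sq_abs _
    have key := rpow_mul_Gamma_rpow_mul_exp_le hl hx
      (one_le_rpow (by linarith) (by linarith))
      (by simpa using rpow_le_rpow_of_exponent_le (by linarith : 1 ≤ l) (by linarith : 2 * ε ≤ 1))
      hsq
    convert key using 3
    · rw [hx_def]; ring
    · rw [hx_def]; field_simp; ring
  · positivity

/-- Tail estimate in the proof of Lemma 4.3 of the paper: the contribution to `Q₁`
of those `D` with `|4π v′ D − ℓ| ≥ ℓ^{1/2+ε}` is exponentially small in `ℓ`. -/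
theorem stmt_10 (ε : ℝ) (hε : ε ∈ Set.Ioo (0 : ℝ) (1 / 2)) :
    ∃ c : ℝ, 0 < c ∧ ∃ C : ℝ, 0 < C ∧ ∃ ℓ₀ : ℝ, 2 ≤ ℓ₀ ∧
      ∀ l : ℝ, ℓ₀ ≤ l → ∀ v' : ℝ, 0 < v' →
        (∑' D : ℕ, if 0 < D ∧ l ^ (1 / 2 + ε) ≤ |4 * π * v' * D - l| then
            (4 * π * v' * D) ^ (l / 2) * (Real.Gamma l) ^ (-(1 : ℝ) / 2) *
              Real.exp (-2 * π * v' * D)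
          else 0) ≤ C * (1 + 1 / v') * Real.exp (-c * l ^ ε) := by
  obtain ⟨hε0, hε1⟩ := hε
  obtain ⟨ℓ₁, hℓ₁⟩ := eventually_atTop.mp <|
    (tendsto_rpow_mul_exp_neg_mul_rpow_atTop_nhds_zero 2 (1 / 32) (by norm_num)
      (by linarith : 0 < 2 * ε)).eventually (ge_mem_nhds zero_lt_one)
  refine ⟨1 / 32, by norm_num, 6, by norm_num, max ℓ₁ 2, le_max_right _ _, fun l hl v' hv' ↦ ?_⟩
  have hl2 : 2 ≤ l := le_of_max_le_right hl
  have hl0 : 0 < l := by linarith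
  set A := l ^ (2 * ε)
  have hsmall : l ^ 2 * exp (-(A / 32)) ≤ 1 := by
    simpa [A, div_eq_inv_mul] using hℓ₁ l (le_of_max_le_left hl)
  have hA : l ^ ε ≤ A := rpow_le_rpow_of_exponent_le (by linarith) (by linarith)
  have hinv : 1 + 1 / (π * v' / (16 * l)) ≤ 6 * l * (1 + 1 / v') := by
    rw [one_div_div, mul_add, mul_one, mul_one_div]
    have : 16 * l / (π * v') ≤ 6 * l / v' := by
      rw [div_le_div_iff₀ (by positivity) hv']
      nlinarith [pi_gt_three, mul_pos hl0 hv']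
    linarith
  change ∑' D, tailTerm ε l v' D ≤ _
  calc ∑' D, tailTerm ε l v' D ≤ l * exp (-(A / 16)) * (1 + 1 / (π * v' / (16 * l))) :=
        tsum_le_mul_one_add_inv_of_le_mul_exp (by positivity) (tailTerm_nonneg ε l v' hl0 hv')
          (tailTerm_le hε0.le hε1.le hl2 hv')
    _ ≤ l * exp (-(A / 16)) * (6 * l * (1 + 1 / v')) := by gcongr
    _ = 6 * (l ^ 2 * exp (-(A / 32))) * (1 + 1 / v') * exp (-(A / 32)) := by
        rw [show -(A / 16) = -(A / 32) + -(A / 32) by ring, exp_add]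
        ring
    _ ≤ 6 * 1 * (1 + 1 / v') * exp (-(1 / 32) * l ^ ε) := by
        gcongr
        linarith
    _ = 6 * (1 + 1 / v') * exp (-(1 / 32) * l ^ ε) := by ring
end
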